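/- arXiv:0801.4614 — 8 statements merged into one kernel-verified Lean document; each statement's English description precedes it below -/
import Mathlib

section
/- Let A be a finite group with a normal subgroup G such that A/G is cyclic. Let X and Y be elements of A that have the same image in A/G. Suppose that X^2 is conjugate to Y^2, and X^r is conjugate to Y^r for some odd integer r > 1, but X is not conjugate to Y. Then 4 divides the order of G. -/
open Subgroup

lemma aux_two_elem {Γ : Type*} [Group Γ] (H : Subgroup Γ) (hH : Nat.card H ∣ 2)
    {x y : Γ} (hx : x ∈ H) (hy : y ∈ H) (hx1 : x ≠ 1) (hy1 : y ≠ 1) : x = y := by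
  have hfin : Finite H := Nat.finite_of_card_ne_zero (by rintro h; rw [h] at hH; norm_num at hH)
  set x' : H := ⟨x, hx⟩ with hx'def
  set y' : H := ⟨y, hy⟩ with hy'def
  have hx'1 : x' ≠ 1 := fun h => hx1 (congrArg Subtype.val h)
  have hy'1 : y' ≠ 1 := fun h => hy1 (congrArg Subtype.val h)
  have hox : orderOf x' ∣ 2 := dvd_trans (orderOf_dvd_natCard x') hH
  have hox2 : orderOf x' = 2 := by
    rcases (Nat.prime_two.eq_one_or_self_of_dvd _ hox) with h | h
    · exact absurd (orderOf_eq_one_iff.mp h) hx'1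
    · exact h
  have hxx : x' ^ (2:ℕ) = 1 := hox2 ▸ pow_orderOf_eq_one x'
  have hcard2 : Nat.card H = 2 :=
    Nat.dvd_antisymm hH (hox2 ▸ orderOf_dvd_natCard x')
  have htop : zpowers x' = (⊤ : Subgroup H) := by
    apply Subgroup.eq_of_le_of_card_ge le_top
    rw [Nat.card_zpowers, hox2]
    rw [show Nat.card (⊤ : Subgroup H) = Nat.card H from Nat.card_congr Subgroup.topEquiv.toEquiv, hcard2]
  have hyy : y' ∈ zpowers x' := htop ▸ Subgroup.mem_top y'
  obtain ⟨n, hn⟩ := hyy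
  have hsq : ∀ m : ℤ, (x' ^ m) ^ (2:ℕ) = 1 := fun m => by
    rw [← zpow_natCast, ← zpow_mul, mul_comm, zpow_mul]
    simp [show x' ^ (2:ℤ) = 1 by exact_mod_cast hxx]
  rcases Int.even_or_odd n with ⟨m, hm⟩ | ⟨m, hm⟩
  · exfalso
    apply hy'1
    have : x' ^ n = 1 := by
      rw [hm, zpow_add, ← sq]
      exact hsq m
    rw [← hn]; exact this
  · have hxy' : x' ^ n = x' := by
      rw [hm, zpow_add, mul_comm (2:ℤ) m, zpow_mul]
      rw [show ((x' ^ m) ^ (2:ℤ)) = ((x' ^ m) ^ (2:ℕ)) by norm_cast, hsq m]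
      simp
    have : y' = x' := by rw [← hn]; exact hxy'
    exact (congrArg Subtype.val this).symm

lemma aux_le_center {Γ : Type*} [Group Γ] (H : Subgroup Γ) [H.Normal]
    (hH : Nat.card H ∣ 2) : H ≤ Subgroup.center Γ := by
  intro h hh
  rw [Subgroup.mem_center_iff]
  intro a
  by_cases h1 : h = 1
  · simp [h1]
  · have hc : a * h * a⁻¹ ∈ H := Subgroup.Normal.conj_mem ‹H.Normal› h hh a
    have hc1 : a * h * a⁻¹ ≠ 1 := by
      intro he
      apply h1
      have : h = a⁻¹ * (a * h * a⁻¹) * a := by group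
      rw [he] at this
      simpa using this
    have heq := aux_two_elem H hH hc hh hc1 h1
    calc a * h = (a * h * a⁻¹) * a := by group
    _ = h * a := by rw [heq]

open Pointwise in
lemma aux_conj_two_part {Γ : Type*} [Group Γ] [Finite Γ] (K : Subgroup Γ) [K.Normal]
    (hK : Odd (Nat.card K)) (z w : Γ) (k : ℕ)
    (hz : z ^ 2 ^ k = 1) (hw : w ^ 2 ^ k = 1) (hzw : z⁻¹ * w ∈ K) : IsConj z w := by
  classical
  have hKodd : ¬ 2 ∣ Nat.card K := by
    rintro ⟨c, hc⟩; obtain ⟨d, hd⟩ := hK; omega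
  have hcop : ∀ (u : Γ) (i : ℕ), u ^ 2 ^ i = 1 → u ∈ K → u = 1 := by
    intro u i hu huK
    have h1 : orderOf u ∣ 2 ^ i := orderOf_dvd_of_pow_eq_one hu
    have h2 : orderOf u ∣ Nat.card K := K.orderOf_dvd_natCard huK
    have hco : Nat.Coprime (2 ^ i) (Nat.card K) := by
      apply Nat.Coprime.pow_left
      rw [Nat.Prime.coprime_iff_not_dvd Nat.prime_two]
      exact hKodd
    have h3 : Nat.Coprime (orderOf u) (Nat.card K) := Nat.Coprime.coprime_dvd_left h1 hco
    have h4 : orderOf u = 1 := Nat.eq_one_of_dvd_coprimes h3 dvd_rfl h2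
    exact orderOf_eq_one_iff.mp h4
  -- the subgroup M = <z> K
  set M : Subgroup Γ := Subgroup.zpowers z ⊔ K with hMdef
  have hzM : z ∈ M := Subgroup.mem_sup_left (Subgroup.mem_zpowers z)
  have hwM : w ∈ M := by
    have : w = z * (z⁻¹ * w) := by group
    rw [this]
    exact mul_mem hzM (Subgroup.mem_sup_right hzw)
  set π : Γ →* Γ ⧸ K := QuotientGroup.mk' K with hπdef
  have hπzw : π z = π w := by
    have := (QuotientGroup.eq (s := K) (a := z) (b := w)).mpr hzw
    exact this
  -- M maps into the cyclic subgroup generated by π z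
  have hMle : M ≤ Subgroup.comap π (Subgroup.zpowers (π z)) := by
    apply sup_le
    · rw [Subgroup.zpowers_le]
      exact Subgroup.mem_comap.mpr (Subgroup.mem_zpowers (π z))
    · intro x hx
      rw [Subgroup.mem_comap]
      have : π x = 1 := (QuotientGroup.eq_one_iff x).mpr hx
      rw [this]; exact one_mem _
  -- order of π z equals order of z
  have hordπ : orderOf (π z) = orderOf z := by
    apply Nat.dvd_antisymm (orderOf_map_dvd π z)
    apply orderOf_dvd_of_pow_eq_one
    apply hcop _ k
    · rw [← pow_mul, mul_comm, pow_mul, hz, one_pow]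
    · rw [← QuotientGroup.eq_one_iff, ← QuotientGroup.mk'_apply, ← hπdef, map_pow,
        pow_orderOf_eq_one]
  -- set up elements of M
  set z' : M := ⟨z, hzM⟩ with hz'def
  set w' : M := ⟨w, hwM⟩ with hw'def
  have hordz' : orderOf z' = orderOf z := Subgroup.orderOf_mk z hzM
  have hordw' : orderOf w' = orderOf w := Subgroup.orderOf_mk w hwM
  have hz2 : ∃ j, orderOf z = 2 ^ j := by
    obtain ⟨j, -, hj⟩ := (Nat.dvd_prime_pow Nat.prime_two).mp (orderOf_dvd_of_pow_eq_one hz)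
    exact ⟨j, hj⟩
  obtain ⟨j, hj⟩ := hz2
  haveI : Fact (Nat.Prime 2) := ⟨Nat.prime_two⟩
  -- Sylow subgroups
  have hpz : IsPGroup 2 (Subgroup.zpowers z') := by
    apply IsPGroup.of_card (n := j)
    rw [Nat.card_zpowers, hordz', hj]
  have hpw : IsPGroup 2 (Subgroup.zpowers w') := by
    obtain ⟨i, -, hi⟩ := (Nat.dvd_prime_pow Nat.prime_two).mp
      (orderOf_dvd_of_pow_eq_one (x := w') (n := 2 ^ k)
        (by ext; simpa using hw))
    exact IsPGroup.of_card (n := i) (by rw [Nat.card_zpowers, hi])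
  obtain ⟨S, hS⟩ := hpz.exists_le_sylow
  obtain ⟨T, hT⟩ := hpw.exists_le_sylow
  -- every Sylow 2-subgroup of M injects into zpowers (π z)
  have hinj : ∀ (R : Sylow 2 M), Nat.card R ∣ orderOf z := by
    intro R
    have hres : ∀ x : Γ, x ∈ M → π x ∈ Subgroup.zpowers (π z) := fun x hx =>
      Subgroup.mem_comap.mp (hMle hx)
    set ψ : R →* Subgroup.zpowers (π z) :=
      MonoidHom.codRestrict (π.comp (M.subtype.comp (R : Subgroup M).subtype))
        (Subgroup.zpowers (π z)) (fun x => hres _ x.1.2) with hψdef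
    have hψinj : Function.Injective ψ := by
      rw [← MonoidHom.ker_eq_bot_iff, Subgroup.eq_bot_iff_forall]
      intro x hx
      have hx1 : π (x.1.1 : Γ) = 1 := by
        have := congrArg Subtype.val hx
        simpa [hψdef] using this
      have hxK : (x.1.1 : Γ) ∈ K := (QuotientGroup.eq_one_iff _).mp hx1
      obtain ⟨i, hi⟩ := IsPGroup.iff_orderOf.mp R.2 x
      have hxord : (x.1.1 : Γ) ^ 2 ^ i = 1 := by
        have h1 : x ^ 2 ^ i = 1 := by rw [← hi]; exact pow_orderOf_eq_one x
        have := congrArg (fun t : R => ((t : M) : Γ)) h1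
        simpa using this
      have := hcop _ i hxord hxK
      ext
      simpa using this
    calc Nat.card R ∣ Nat.card (Subgroup.zpowers (π z)) :=
          Subgroup.card_dvd_of_injective ψ hψinj
    _ = orderOf z := by rw [Nat.card_zpowers, hordπ]
  -- S equals zpowers z'
  have hSeq : (S : Subgroup M) = Subgroup.zpowers z' := by
    symm
    apply Subgroup.eq_of_le_of_card_ge hS
    rw [Nat.card_zpowers, hordz']
    exact Nat.le_of_dvd (by rw [hj]; positivity) (hinj S)
  -- conjugate T to S
  obtain ⟨g, hg⟩ := MulAction.exists_smul_eq M T S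
  have hgw : g * w' * g⁻¹ ∈ (S : Subgroup M) := by
    rw [← hg, Sylow.coe_subgroup_smul]
    have := Subgroup.smul_mem_pointwise_smul w' (MulAut.conj g) (T : Subgroup M) (hT (Subgroup.mem_zpowers w'))
    simpa [MulAut.conj_apply] using this
  rw [hSeq] at hgw
  obtain ⟨n, hn⟩ := hgw
  -- push down to Γ
  have hgwΓ : (g : Γ) * w * (g : Γ)⁻¹ = z ^ n := by
    have := congrArg (Subtype.val) hn
    simpa [hz'def, hw'def] using this.symm
  -- analyze in the quotient
  have hπg : π (g : Γ) ∈ Subgroup.zpowers (π z) := Subgroup.mem_comap.mp (hMle g.2)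
  obtain ⟨i, hi⟩ := hπg
  have hcomm : Commute (π (g : Γ)) (π w) := by
    rw [← hi, ← hπzw]
    exact (Commute.refl (π z)).zpow_left i
  have hπeq : (π z) ^ n = π z := by
    have h1 : π ((g : Γ) * w * (g : Γ)⁻¹) = π (z ^ n) := congrArg π hgwΓ
    rw [map_mul, map_mul, map_inv, map_zpow] at h1
    calc (π z) ^ n = π (g:Γ) * π w * (π (g:Γ))⁻¹ := h1.symm
    _ = π w * π (g:Γ) * (π (g:Γ))⁻¹ := by rw [hcomm.eq]
    _ = π w := by group
    _ = π z := hπzw.symm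
  have hdvd : (orderOf z : ℤ) ∣ n - 1 := by
    rw [← hordπ]
    rw [orderOf_dvd_iff_zpow_eq_one, zpow_sub, hπeq]
    simp
  have hzn : z ^ n = z := by
    have h1 : z ^ (n - 1) = 1 := orderOf_dvd_iff_zpow_eq_one.mp hdvd
    calc z ^ n = z ^ (n - 1) * z ^ (1:ℤ) := by rw [← zpow_add]; ring_nf
    _ = z := by rw [h1]; simp
  rw [hzn] at hgwΓ
  apply IsConj.symm
  exact ⟨⟨(g:Γ), (g:Γ)⁻¹, by simp, by simp⟩, by simp [SemiconjBy]; rw [← hgwΓ]; group⟩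

lemma aux_conj_two_part_sub {A : Type*} [Group A] [Finite A] (E N : Subgroup A) [N.Normal]
    (hN : Odd (Nat.card N)) (z w : A) (hz : z ∈ E) (hw : w ∈ E) (k : ℕ)
    (hzk : z ^ 2 ^ k = 1) (hwk : w ^ 2 ^ k = 1) (hzw : z⁻¹ * w ∈ N) :
    ∃ h ∈ E, h * z * h⁻¹ = w := by
  haveI : (N.subgroupOf E).Normal := Subgroup.Normal.subgroupOf ‹N.Normal› E
  have hcard : Nat.card (N.subgroupOf E) ∣ Nat.card N := by
    apply Subgroup.card_dvd_of_injective
      (MonoidHom.codRestrict (E.subtype.comp (N.subgroupOf E).subtype) N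
        (fun x => x.2))
    intro a b hab
    have h0 : ((a : E) : A) = ((b : E) : A) := by
      exact congrArg (fun t : N => (t : A)) hab
    exact Subtype.ext (Subtype.ext h0)
  have hNodd : Odd (Nat.card (N.subgroupOf E)) := by
    rcases Nat.even_or_odd (Nat.card (N.subgroupOf E)) with he | ho
    · exfalso
      obtain ⟨c, hc⟩ := he
      obtain ⟨d, hd⟩ := hN
      obtain ⟨e, he'⟩ := hcard
      have : Nat.card N = 2 * (c * e) := by rw [he', hc]; ring
      omega
    · exact ho
  set z' : E := ⟨z, hz⟩
  set w' : E := ⟨w, hw⟩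
  have hconj : IsConj z' w' := by
    apply aux_conj_two_part (N.subgroupOf E) hNodd z' w' k
    · ext; simpa using hzk
    · ext; simpa using hwk
    · simpa [Subgroup.mem_subgroupOf] using hzw
  obtain ⟨⟨c, c', hcc', hc'c⟩, hc⟩ := hconj
  refine ⟨(c : A), c.2, ?_⟩
  have : c * z' = w' * c := hc
  have h1 : (c : A) * z = w * (c : A) := congrArg Subtype.val this
  rw [h1]; group

lemma aux_two_part_unique {Γ : Type*} [Group Γ] (x z₁ p₁ z₂ p₂ : Γ)
    (h₁ : z₁ ∈ zpowers x) (h₂ : p₁ ∈ zpowers x) (h₃ : z₂ ∈ zpowers x) (h₄ : p₂ ∈ zpowers x)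
    (heq : z₁ * p₁ = z₂ * p₂) (k₁ k₂ : ℕ) (hz₁ : z₁ ^ 2 ^ k₁ = 1) (hz₂ : z₂ ^ 2 ^ k₂ = 1)
    (m₁ m₂ : ℕ) (hm₁ : Odd m₁) (hm₂ : Odd m₂) (hp₁ : p₁ ^ m₁ = 1) (hp₂ : p₂ ^ m₂ = 1) :
    z₁ = z₂ := by
  obtain ⟨a₁, ha₁⟩ := h₁
  obtain ⟨a₂, ha₂⟩ := h₂
  obtain ⟨a₃, ha₃⟩ := h₃
  obtain ⟨a₄, ha₄⟩ := h₄
  have hc12 : Commute z₂⁻¹ z₁ := by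
    rw [← ha₁, ← ha₃]; exact ((Commute.refl x).zpow_zpow a₃ a₁).inv_left
  have hc34 : Commute p₂ p₁⁻¹ := by
    rw [← ha₂, ← ha₄]; exact ((Commute.refl x).zpow_zpow a₄ a₂).inv_right
  set t := z₂⁻¹ * z₁ with htdef
  have ht2 : t = p₂ * p₁⁻¹ := by
    rw [htdef]
    have h5 : z₂⁻¹ * (z₁ * p₁) * p₁⁻¹ = z₂⁻¹ * (z₂ * p₂) * p₁⁻¹ := by rw [heq]
    calc z₂⁻¹ * z₁ = z₂⁻¹ * (z₁ * p₁) * p₁⁻¹ := by group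
    _ = z₂⁻¹ * (z₂ * p₂) * p₁⁻¹ := h5
    _ = p₂ * p₁⁻¹ := by group
  have ez2 : z₂ ^ 2 ^ (k₁ + k₂) = 1 := by rw [pow_add, mul_comm, pow_mul, hz₂, one_pow]
  have ez1 : z₁ ^ 2 ^ (k₁ + k₂) = 1 := by rw [pow_add, pow_mul, hz₁, one_pow]
  have hta : t ^ 2 ^ (k₁ + k₂) = 1 := by
    rw [htdef, hc12.mul_pow, inv_pow, ez2, ez1]; simp
  have ep2 : p₂ ^ (m₁ * m₂) = 1 := by rw [mul_comm, pow_mul, hp₂, one_pow]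
  have ep1 : p₁ ^ (m₁ * m₂) = 1 := by rw [pow_mul, hp₁, one_pow]
  have htb : t ^ (m₁ * m₂) = 1 := by
    rw [ht2, hc34.mul_pow, inv_pow, ep2, ep1]; simp
  have hodd : Odd (m₁ * m₂) := hm₁.mul hm₂
  have hcop : Nat.Coprime (2 ^ (k₁ + k₂)) (m₁ * m₂) := by
    apply Nat.Coprime.pow_left
    rw [Nat.Prime.coprime_iff_not_dvd Nat.prime_two]
    rintro ⟨c, hc⟩; obtain ⟨d, hd⟩ := hodd; omega
  have h6 : orderOf t ∣ 1 := by
    have d1 := orderOf_dvd_of_pow_eq_one hta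
    have d2 := orderOf_dvd_of_pow_eq_one htb
    have h7 : orderOf t ∣ Nat.gcd (2 ^ (k₁ + k₂)) (m₁ * m₂) := Nat.dvd_gcd d1 d2
    rwa [Nat.Coprime.gcd_eq_one hcop] at h7
  have ht1 : t = 1 := orderOf_eq_one_iff.mp (Nat.dvd_one.mp h6)
  have : z₂⁻¹ * z₁ = 1 := ht1
  calc z₁ = z₂ * (z₂⁻¹ * z₁) := by group
  _ = z₂ := by rw [this]; group

lemma aux_bezout {a b : ℕ} (h : Nat.Coprime a b) : ∃ u v : ℤ, (a : ℤ) * u + (b : ℤ) * v = 1 := by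
  have hgcd : Int.gcd (a : ℤ) (b : ℤ) = 1 := by
    rw [Int.gcd_natCast_natCast]; exact h
  refine ⟨Int.gcdA (a : ℤ) (b : ℤ), Int.gcdB (a : ℤ) (b : ℤ), ?_⟩
  have := Int.gcd_eq_gcd_ab (a : ℤ) (b : ℤ)
  rw [hgcd] at this
  exact_mod_cast this.symm

lemma aux_decomp {A : Type*} [Group A] [Finite A] (x : A) :
    ∃ (z p : A) (k m : ℕ), z ∈ zpowers x ∧ p ∈ zpowers x ∧ x = z * p ∧ Commute z p ∧
      z ^ 2 ^ k = 1 ∧ Odd m ∧ p ^ m = 1 := by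
  set n := orderOf x with hndef
  have hn0 : n ≠ 0 := (orderOf_pos x).ne'
  set k := n.factorization 2 with hkdef
  set m := n / 2 ^ k with hmdef
  have hnkm : 2 ^ k * m = n := Nat.ordProj_mul_ordCompl_eq_self n 2
  have hmodd : Odd m := by
    have h2 : ¬ 2 ∣ m := by
      rw [hmdef, hkdef]
      exact Nat.not_dvd_ordCompl Nat.prime_two hn0
    rw [Nat.odd_iff]
    rcases Nat.mod_two_eq_zero_or_one m with h | h
    · exact absurd (Nat.dvd_of_mod_eq_zero h) h2
    · exact h
  have hcop : Nat.Coprime (2 ^ k) m := Nat.Coprime.pow_left k (Nat.coprime_ordCompl Nat.prime_two hn0)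
  -- Bezout
  have hgcd : Int.gcd ((2 ^ k : ℕ) : ℤ) ((m : ℕ) : ℤ) = 1 := by
    rw [Int.gcd_natCast_natCast]
    exact hcop
  set u := Int.gcdA ((2 ^ k : ℕ) : ℤ) ((m : ℕ) : ℤ) with hudef
  set v := Int.gcdB ((2 ^ k : ℕ) : ℤ) ((m : ℕ) : ℤ) with hvdef
  have hbez : ((2 ^ k : ℕ) : ℤ) * u + ((m : ℕ) : ℤ) * v = 1 := by
    have := Int.gcd_eq_gcd_ab ((2 ^ k : ℕ) : ℤ) ((m : ℕ) : ℤ)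
    rw [hgcd] at this
    exact_mod_cast this.symm
  refine ⟨x ^ (((m : ℕ) : ℤ) * v), x ^ (((2 ^ k : ℕ) : ℤ) * u), k, m, ⟨_, rfl⟩, ⟨_, rfl⟩, ?_, ?_, ?_, hmodd, ?_⟩
  · rw [← zpow_add]
    have : ((m : ℕ) : ℤ) * v + ((2 ^ k : ℕ) : ℤ) * u = 1 := by linarith [hbez]
    rw [this, zpow_one]
  · exact (Commute.refl x).zpow_zpow _ _
  · rw [← zpow_natCast (x ^ (((m : ℕ) : ℤ) * v)) (2 ^ k), ← zpow_mul]
    have : ((m : ℕ) : ℤ) * v * ((2 ^ k : ℕ) : ℤ) = ((n : ℕ) : ℤ) * v := by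
      push_cast [← hnkm]
      ring
    rw [this, zpow_mul, zpow_natCast, pow_orderOf_eq_one, one_zpow]
  · rw [← zpow_natCast (x ^ (((2 ^ k : ℕ) : ℤ) * u)) m, ← zpow_mul]
    have : ((2 ^ k : ℕ) : ℤ) * u * ((m : ℕ) : ℤ) = ((n : ℕ) : ℤ) * u := by
      push_cast [← hnkm]
      ring
    rw [this, zpow_mul, zpow_natCast, pow_orderOf_eq_one, one_zpow]

lemma aux_main {A : Type*} [Group A] [Finite A] (N : Subgroup A) [N.Normal]
    (hN : Odd (Nat.card N))
    (hcomm : ∀ a b : A, ((a * b * a⁻¹ : A) : A ⧸ N) = (b : A ⧸ N))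
    (X Y : A) (hXY : ((X : A ⧸ N)) = ((Y : A ⧸ N)))
    (h2 : IsConj (X ^ 2) (Y ^ 2)) : IsConj X Y := by
  classical
  obtain ⟨Z, P, kX, mX, hZmem, hPmem, hXZP, hZPcomm, hZord, hmXodd, hPord⟩ := aux_decomp X
  obtain ⟨W, Q, kY, mY, hWmem, hQmem, hYWQ, hWQcomm, hWord, hmYodd, hQord⟩ := aux_decomp Y
  set π : A →* A ⧸ N := QuotientGroup.mk' N with hπdef
  -- images of the two-parts agree
  have hmem' : ∀ t : A, t ∈ zpowers X → π t ∈ zpowers (π X) := by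
    rintro t ⟨a, ha⟩
    exact ⟨a, by rw [← ha]; exact (map_zpow π X a).symm⟩
  have hmemY' : ∀ t : A, t ∈ zpowers Y → π t ∈ zpowers (π X) := by
    rintro t ⟨a, ha⟩
    refine ⟨a, ?_⟩
    have : π Y = π X := hXY.symm
    rw [← ha, ← this]
    exact (map_zpow π Y a).symm
  have hπZW : π Z = π W := by
    apply aux_two_part_unique (π X) (π Z) (π P) (π W) (π Q)
      (hmem' Z hZmem) (hmem' P hPmem) (hmemY' W hWmem) (hmemY' Q hQmem)
      _ kX kY _ _ mX mY hmXodd hmYodd _ _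
    · rw [← map_mul, ← hXZP, ← map_mul, ← hYWQ]; exact hXY
    · rw [← map_pow, hZord, map_one]
    · rw [← map_pow, hWord, map_one]
    · rw [← map_pow, hPord, map_one]
    · rw [← map_pow, hQord, map_one]
  set K := max kX kY with hKdef
  have hZK : Z ^ 2 ^ K = 1 := by
    rcases Nat.exists_eq_add_of_le (le_max_left kX kY) with ⟨c, hc⟩
    rw [hKdef, hc, pow_add, pow_mul, hZord, one_pow]
  have hWK : W ^ 2 ^ K = 1 := by
    rcases Nat.exists_eq_add_of_le (le_max_right kX kY) with ⟨c, hc⟩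
    rw [hKdef, hc, pow_add, pow_mul, hWord, one_pow]
  have hZWN : Z⁻¹ * W ∈ N := by
    rw [← QuotientGroup.eq]
    exact hπZW
  -- conjugate the 2-parts
  obtain ⟨⟨h, h', hh1, hh2⟩, hh⟩ := aux_conj_two_part N hN Z W K hZK hWK hZWN
  have hhZW : h * Z * h⁻¹ = W := by
    have : h * Z = W * h := hh
    rw [this]; group
  set X₁ := h * X * h⁻¹ with hX₁def
  set P₁ := h * P * h⁻¹ with hP₁def
  have hX₁WP : X₁ = W * P₁ := by
    rw [hX₁def, hP₁def, hXZP, ← hhZW]; group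
  have hP₁ord : P₁ ^ mX = 1 := by
    rw [hP₁def, ← MulAut.conj_apply, ← map_pow, hPord, map_one]
  have hWP₁comm : Commute W P₁ := by
    rw [← hhZW, hP₁def]
    have := hZPcomm.map (MulAut.conj h)
    simpa [MulAut.conj_apply] using this
  have hπX₁ : (X₁ : A ⧸ N) = (Y : A ⧸ N) := by
    rw [hX₁def]
    calc ((h * X * h⁻¹ : A) : A ⧸ N) = (X : A ⧸ N) := hcomm h X
    _ = (Y : A ⧸ N) := hXY
  have h2' : IsConj (X₁ ^ 2) (Y ^ 2) := by
    apply IsConj.trans _ h2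
    apply IsConj.symm
    exact ⟨⟨h, h', hh1, hh2⟩, by
      show h * X ^ 2 = X₁ ^ 2 * h
      rw [hX₁def, conj_pow]
      group⟩
  obtain ⟨⟨c, c', hc1, hc2⟩, hcconj⟩ := h2'
  have hcX₁Y : c * X₁ ^ 2 * c⁻¹ = Y ^ 2 := by
    have : c * X₁ ^ 2 = Y ^ 2 * c := hcconj
    rw [this]; group
  -- exponent juggling to extract components
  set T := orderOf W with hTdef
  have hTdvd : T ∣ 2 ^ kY := orderOf_dvd_of_pow_eq_one hWord
  obtain ⟨t, -, hT2⟩ := (Nat.dvd_prime_pow Nat.prime_two).mp hTdvd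
  set LL := mX * mY with hLLdef
  have hLLodd : Odd LL := hmXodd.mul hmYodd
  have hP₁LL : P₁ ^ LL = 1 := by rw [hLLdef, pow_mul, hP₁ord, one_pow]
  have hQLL : Q ^ LL = 1 := by rw [hLLdef, mul_comm, pow_mul, hQord, one_pow]
  have hLL2 : ¬ 2 ∣ LL := by
    obtain ⟨d, hd⟩ := hLLodd; omega
  have hcop1 : Nat.Coprime (2 * T) LL := by
    apply Nat.Coprime.mul
    · rw [Nat.Prime.coprime_iff_not_dvd Nat.prime_two]; exact hLL2
    · rw [hT2]
      apply Nat.Coprime.pow_left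
      rw [Nat.Prime.coprime_iff_not_dvd Nat.prime_two]; exact hLL2
  obtain ⟨a, b, hbez1⟩ := aux_bezout hcop1
  set s : ℤ := (T : ℤ) * a with hsdef
  have hWT : W ^ (T : ℤ) = 1 := by rw [zpow_natCast, hTdef, pow_orderOf_eq_one]
  have hW2s : W ^ (2 * s) = 1 := by
    rw [hsdef, show (2 : ℤ) * ((T:ℤ) * a) = (T:ℤ) * (2 * a) by ring, zpow_mul, hWT, one_zpow]
  have h2s : 2 * s = 1 - (LL : ℤ) * b := by
    rw [hsdef]
    push_cast at hbez1
    linarith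
  have hP₁2s : P₁ ^ (2 * s) = P₁ := by
    rw [h2s, zpow_sub, zpow_one, zpow_mul, show P₁ ^ (LL : ℤ) = 1 by rw [zpow_natCast, hP₁LL],
      one_zpow]
    simp
  have hQ2s : Q ^ (2 * s) = Q := by
    rw [h2s, zpow_sub, zpow_one, zpow_mul, show Q ^ (LL : ℤ) = 1 by rw [zpow_natCast, hQLL],
      one_zpow]
    simp
  have hX₁2s : (X₁ ^ 2) ^ s = P₁ := by
    rw [← zpow_natCast X₁ 2, ← zpow_mul, show ((2:ℕ):ℤ) * s = 2 * s by norm_num]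
    rw [hX₁WP, hWP₁comm.mul_zpow, hW2s, hP₁2s, one_mul]
  have hY2s : (Y ^ 2) ^ s = Q := by
    rw [← zpow_natCast Y 2, ← zpow_mul, show ((2:ℕ):ℤ) * s = 2 * s by norm_num]
    rw [hYWQ, hWQcomm.mul_zpow, hW2s, hQ2s, one_mul]
  have hcP : c * P₁ * c⁻¹ = Q := by
    have e0 : (MulAut.conj c) (X₁ ^ 2) = Y ^ 2 := by
      rw [MulAut.conj_apply]; exact hcX₁Y
    calc c * P₁ * c⁻¹ = (MulAut.conj c) P₁ := by rw [MulAut.conj_apply]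
    _ = (MulAut.conj c) ((X₁ ^ 2) ^ s) := by rw [hX₁2s]
    _ = ((MulAut.conj c) (X₁ ^ 2)) ^ s := map_zpow _ _ _
    _ = (Y ^ 2) ^ s := by rw [e0]
    _ = Q := hY2s
  -- second exponent: extract W^2
  obtain ⟨a', b', hbez2⟩ := aux_bezout hcop1.symm
  set s' : ℤ := (LL : ℤ) * a' with hs'def
  have hP₁2s' : P₁ ^ (2 * s') = 1 := by
    rw [hs'def, show (2:ℤ) * ((LL:ℤ) * a') = (LL:ℤ) * (2 * a') by ring, zpow_mul,
      show P₁ ^ (LL : ℤ) = 1 by rw [zpow_natCast, hP₁LL], one_zpow]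
  have hQ2s' : Q ^ (2 * s') = 1 := by
    rw [hs'def, show (2:ℤ) * ((LL:ℤ) * a') = (LL:ℤ) * (2 * a') by ring, zpow_mul,
      show Q ^ (LL : ℤ) = 1 by rw [zpow_natCast, hQLL], one_zpow]
  have h2s' : 2 * s' = 2 - (T : ℤ) * (4 * b') := by
    rw [hs'def]
    push_cast at hbez2
    linarith
  have hW2s' : W ^ (2 * s') = W ^ (2 : ℤ) := by
    rw [h2s', zpow_sub, zpow_mul, hWT, one_zpow]
    simp
  have hX₁2s' : (X₁ ^ 2) ^ s' = W ^ (2:ℤ) := by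
    rw [← zpow_natCast X₁ 2, ← zpow_mul, show ((2:ℕ):ℤ) * s' = 2 * s' by norm_num]
    rw [hX₁WP, hWP₁comm.mul_zpow, hW2s', hP₁2s', mul_one]
  have hY2s' : (Y ^ 2) ^ s' = W ^ (2:ℤ) := by
    rw [← zpow_natCast Y 2, ← zpow_mul, show ((2:ℕ):ℤ) * s' = 2 * s' by norm_num]
    rw [hYWQ, hWQcomm.mul_zpow, hW2s', hQ2s', mul_one]
  have hcW2 : c * W ^ (2:ℤ) * c⁻¹ = W ^ (2:ℤ) := by
    have e0 : (MulAut.conj c) (X₁ ^ 2) = Y ^ 2 := by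
      rw [MulAut.conj_apply]; exact hcX₁Y
    calc c * W ^ (2:ℤ) * c⁻¹ = (MulAut.conj c) (W ^ (2:ℤ)) := by rw [MulAut.conj_apply]
    _ = (MulAut.conj c) ((X₁ ^ 2) ^ s') := by rw [hX₁2s']
    _ = ((MulAut.conj c) (X₁ ^ 2)) ^ s' := map_zpow _ _ _
    _ = (Y ^ 2) ^ s' := by rw [e0]
    _ = W ^ (2:ℤ) := hY2s'
  -- the element V
  set V := c⁻¹ * W * c with hVdef
  have hVc : c * V * c⁻¹ = W := by rw [hVdef]; group
  have hVK : V ^ 2 ^ K = 1 := by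
    have : V = c⁻¹ * W * (c⁻¹)⁻¹ := by rw [hVdef]; group
    rw [this, conj_pow, hWK]
    group
  have hQP₁ : c⁻¹ * Q * (c⁻¹)⁻¹ = P₁ := by
    rw [← hcP]; group
  have hVP₁ : Commute V P₁ := by
    have h0 : Commute ((MulAut.conj c⁻¹) W) ((MulAut.conj c⁻¹) Q) := hWQcomm.map _
    rw [MulAut.conj_apply, MulAut.conj_apply, hQP₁] at h0
    have : V = c⁻¹ * W * (c⁻¹)⁻¹ := by rw [hVdef]; group
    rw [this]
    exact h0
  set E := Subgroup.centralizer ({P₁} : Set A) with hEdef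
  have hWE : W ∈ E := by
    rw [hEdef, Subgroup.mem_centralizer_iff]
    rintro y hy
    rw [Set.mem_singleton_iff] at hy
    rw [hy]
    exact hWP₁comm.symm
  have hVE : V ∈ E := by
    rw [hEdef, Subgroup.mem_centralizer_iff]
    rintro y hy
    rw [Set.mem_singleton_iff] at hy
    rw [hy]
    exact hVP₁.symm
  have hWVN : W⁻¹ * V ∈ N := by
    rw [← QuotientGroup.eq]
    have : V = c⁻¹ * W * (c⁻¹)⁻¹ := by rw [hVdef]; group
    rw [this]
    exact (hcomm c⁻¹ W).symm
  obtain ⟨s₀, hs₀E, hs₀⟩ := aux_conj_two_part_sub E N hN W V hWE hVE K hWK hVK hWVN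
  have hs₀P₁ : s₀ * P₁ * s₀⁻¹ = P₁ := by
    rw [hEdef, Subgroup.mem_centralizer_iff] at hs₀E
    have := hs₀E P₁ (Set.mem_singleton P₁)
    rw [← this]; group
  -- final conjugation
  set g := c * s₀ with hgdef
  have hgX₁ : g * X₁ * g⁻¹ = Y := by
    have e1 : g * X₁ * g⁻¹ = c * ((s₀ * W * s₀⁻¹) * (s₀ * P₁ * s₀⁻¹)) * c⁻¹ := by
      rw [hgdef, hX₁WP]; group
    rw [hs₀, hs₀P₁] at e1
    have e2 : c * (V * P₁) * c⁻¹ = (c * V * c⁻¹) * (c * P₁ * c⁻¹) := by group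
    rw [e1, e2, hVc, hcP, ← hYWQ]
  have hconjX₁Y : IsConj X₁ Y :=
    ⟨⟨g, g⁻¹, by simp, by simp⟩, by
      show g * X₁ = Y * g
      rw [← hgX₁]; group⟩
  have hconjXX₁ : IsConj X X₁ :=
    ⟨⟨h, h', hh1, hh2⟩, by
      show h * X = X₁ * h
      rw [hX₁def]; group⟩
  exact hconjXX₁.trans hconjX₁Y

lemma aux_normal_complement {A : Type*} [Group A] [Finite A] (G : Subgroup A) [G.Normal]
    (h4 : ¬ 4 ∣ Nat.card G) :
    ∃ O : Subgroup A, O.Normal ∧ O ≤ G ∧ Odd (Nat.card O) ∧ Nat.card G ∣ Nat.card O * 2 := by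
  classical
  haveI : Fact (Nat.Prime 2) := ⟨Nat.prime_two⟩
  obtain ⟨P⟩ : Nonempty (Sylow 2 G) := inferInstance
  have hcardP : Nat.card P = 2 ^ (Nat.card G).factorization 2 := P.card_eq_multiplicity
  have hG0 : Nat.card G ≠ 0 := Nat.card_pos.ne'
  have he1 : (Nat.card G).factorization 2 ≤ 1 := by
    by_contra hgt
    push_neg at hgt
    apply h4
    calc (4 : ℕ) = 2 ^ 2 := by norm_num
    _ ∣ 2 ^ (Nat.card G).factorization 2 := pow_dvd_pow 2 hgt
    _ ∣ Nat.card G := Nat.ordProj_dvd _ 2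
  have hP2 : Nat.card P ∣ 2 := by
    rw [hcardP]
    calc (2:ℕ) ^ (Nat.card G).factorization 2 ∣ 2 ^ 1 :=
      pow_dvd_pow 2 he1
    _ = 2 := by norm_num
  have hP : Subgroup.normalizer (P : Set G) ≤ Subgroup.centralizer (P : Set G) := by
    intro g hg
    rw [Subgroup.mem_centralizer_iff]
    intro y hy
    by_cases hy1 : y = 1
    · simp [hy1]
    · have hyP : y ∈ (P : Subgroup G) := hy
      have hconj : g * y * g⁻¹ ∈ (P : Subgroup G) := by
        replace hg : g ∈ Subgroup.normalizer ((P : Subgroup G) : Set G) := hg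
        rw [Subgroup.mem_normalizer_iff] at hg
        exact (hg y).mp hyP
      have hc1 : g * y * g⁻¹ ≠ 1 := by
        intro he
        apply hy1
        have : y = g⁻¹ * (g * y * g⁻¹) * g := by group
        rw [he] at this
        simpa using this
      have := aux_two_elem (P : Subgroup G) hP2 hconj hyP hc1 hy1
      calc y * g = (g * y * g⁻¹) * g := by rw [this]
      _ = g * y := by group
  set K := (MonoidHom.transferSylow P hP).ker with hKdef
  have hcompl : Subgroup.IsComplement' K P := MonoidHom.ker_transferSylow_isComplement' P hP
  have hcardmul : Nat.card K * Nat.card P = Nat.card G := hcompl.card_mul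
  have hKodd : Odd (Nat.card K) := by
    rw [Nat.odd_iff]
    rcases Nat.mod_two_eq_zero_or_one (Nat.card K) with hmod | hmod
    · exfalso
      have h2K : 2 ∣ Nat.card K := Nat.dvd_of_mod_eq_zero hmod
      obtain ⟨d, hd⟩ := h2K
      have heq : Nat.card G = 2 ^ ((Nat.card G).factorization 2 + 1) * d := by
        conv_lhs => rw [← hcardmul]
        rw [hcardP, hd, pow_succ]
        ring
      exact Nat.pow_succ_factorization_not_dvd hG0 Nat.prime_two ⟨d, heq⟩
    · exact hmod
  set O := K.map G.subtype with hOdef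
  have hOle : O ≤ G := Subgroup.map_subtype_le K
  have hcardO : Nat.card O = Nat.card K :=
    (Nat.card_congr (Subgroup.equivMapOfInjective K G.subtype G.subtype_injective).toEquiv).symm
  have hKindex : K.index = Nat.card P := hcompl.symm.index_eq_card
  -- membership characterization
  have hOmem : ∀ x : A, x ∈ O ↔ x ∈ G ∧ Odd (orderOf x) := by
    intro x
    constructor
    · rintro ⟨g, hgK, rfl⟩
      refine ⟨g.2, ?_⟩
      have h1 : orderOf (G.subtype g) = orderOf g := Subgroup.orderOf_coe g
      have h2 : orderOf g ∣ Nat.card K := K.orderOf_dvd_natCard hgK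
      rw [h1, Nat.odd_iff]
      rcases Nat.mod_two_eq_zero_or_one (orderOf g) with hmod | hmod
      · exfalso
        obtain ⟨d, hd⟩ := hKodd
        have := (Nat.dvd_of_mod_eq_zero hmod).trans h2
        omega
      · exact hmod
    · rintro ⟨hxG, hxodd⟩
      set g : G := ⟨x, hxG⟩ with hgdef
      have hord : orderOf g = orderOf x := Subgroup.orderOf_mk x hxG
      have hgK : g ∈ K := by
        have h1 : orderOf ((g : G ⧸ K) : G ⧸ K) ∣ orderOf g :=
          orderOf_map_dvd (QuotientGroup.mk' K) g
        have h2 : orderOf ((g : G ⧸ K) : G ⧸ K) ∣ 2 := by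
          calc orderOf ((g : G ⧸ K) : G ⧸ K) ∣ Nat.card (G ⧸ K) := orderOf_dvd_natCard _
          _ = K.index := (Subgroup.index_eq_card K).symm
          _ = Nat.card P := hKindex
          _ ∣ 2 := hP2
        have hodd' : Odd (orderOf ((g : G ⧸ K) : G ⧸ K)) := by
          rw [Nat.odd_iff]
          rw [hord] at h1
          rcases Nat.mod_two_eq_zero_or_one (orderOf ((g : G ⧸ K) : G ⧸ K)) with hmod | hmod
          · exfalso
            obtain ⟨d, hd⟩ := hxodd
            have := (Nat.dvd_of_mod_eq_zero hmod).trans h1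
            omega
          · exact hmod
        have ho1 : orderOf ((g : G ⧸ K) : G ⧸ K) = 1 := by
          rcases Nat.prime_two.eq_one_or_self_of_dvd _ h2 with h | h
          · exact h
          · exfalso
            obtain ⟨d, hd⟩ := hodd'
            omega
        have := orderOf_eq_one_iff.mp ho1
        rwa [QuotientGroup.eq_one_iff] at this
      exact ⟨g, hgK, rfl⟩
  have hONormal : O.Normal := by
    constructor
    intro x hx a
    rw [hOmem] at hx ⊢
    refine ⟨Subgroup.Normal.conj_mem ‹G.Normal› x hx.1 a, ?_⟩
    have : orderOf ((MulAut.conj a) x) = orderOf x :=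
      orderOf_injective (MulAut.conj a).toMonoidHom (MulAut.conj a).injective x
    rw [MulAut.conj_apply] at this
    rw [this]
    exact hx.2
  refine ⟨O, hONormal, hOle, by rw [hcardO]; exact hKodd, ?_⟩
  rw [hcardO, ← hcardmul]
  exact mul_dvd_mul_left (Nat.card K) hP2

theorem stmt_1 {A : Type*} [Group A] [Finite A] (G : Subgroup A) [G.Normal]
    (hcyc : IsCyclic (A ⧸ G)) (X Y : A)
    (hXY : (QuotientGroup.mk X : A ⧸ G) = QuotientGroup.mk Y)
    (h2 : IsConj (X ^ 2) (Y ^ 2))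
    (r : ℕ) (hodd : Odd r) (hr : 1 < r) (hrconj : IsConj (X ^ r) (Y ^ r))
    (hXYnc : ¬ IsConj X Y) :
    4 ∣ Nat.card G := by
  by_contra h4
  obtain ⟨O, hONorm, hOle, hOodd, hOdvd⟩ := aux_normal_complement G h4
  haveI := hONorm
  set Gbar := G.map (QuotientGroup.mk' O) with hGbardef
  haveI hGbarNormal : Gbar.Normal :=
    Subgroup.Normal.map ‹G.Normal› (QuotientGroup.mk' O) (QuotientGroup.mk'_surjective O)
  -- card of Gbar divides 2
  have hGbar2 : Nat.card Gbar ∣ 2 := by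
    set φ := (QuotientGroup.mk' O).comp G.subtype with hφdef
    have hrange : φ.range = Gbar := by
      rw [hφdef, MonoidHom.range_comp, Subgroup.range_subtype]
    have hker : φ.ker = O.subgroupOf G := by
      ext x
      simp [hφdef, MonoidHom.mem_ker, Subgroup.mem_subgroupOf, QuotientGroup.eq_one_iff]
    have hcard1 : Nat.card Gbar = φ.ker.index := by
      rw [← hrange, Subgroup.index_eq_card]
      exact (Nat.card_congr (QuotientGroup.quotientKerEquivRange φ).toEquiv).symm
    have hcardker : Nat.card φ.ker = Nat.card O := by
      rw [hker]
      exact Nat.card_congr (Subgroup.subgroupOfEquivOfLe hOle).toEquiv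
    have hlagrange : Nat.card φ.ker * φ.ker.index = Nat.card G :=
      Subgroup.card_mul_index φ.ker
    have hO0 : 0 < Nat.card O := Nat.card_pos
    have hdvd2 : φ.ker.index * Nat.card O ∣ 2 * Nat.card O := by
      calc φ.ker.index * Nat.card O = Nat.card G := by
            rw [← hlagrange, ← hcardker]; ring
      _ ∣ Nat.card O * 2 := hOdvd
      _ = 2 * Nat.card O := by ring
    rw [hcard1]
    exact (Nat.mul_dvd_mul_iff_right hO0).mp hdvd2
  have hcentral : Gbar ≤ Subgroup.center (A ⧸ O) := aux_le_center Gbar hGbar2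
  haveI hcyc' : IsCyclic ((A ⧸ O) ⧸ Gbar) := by
    have e := QuotientGroup.quotientQuotientEquivQuotient O G hOle
    exact isCyclic_of_surjective e.symm e.symm.surjective
  have hcommQ : ∀ a b : A ⧸ O, a * b = b * a := by
    intro a b
    exact commutative_of_cyclic_center_quotient (QuotientGroup.mk' Gbar)
      (by rw [QuotientGroup.ker_mk']; exact hcentral) a b
  have hcommA : ∀ a b : A, ((a * b * a⁻¹ : A) : A ⧸ O) = (b : A ⧸ O) := by
    intro a b
    have : ((a * b * a⁻¹ : A) : A ⧸ O) =
        (a : A ⧸ O) * (b : A ⧸ O) * (a : A ⧸ O)⁻¹ := by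
      push_cast
      rfl
    rw [this, hcommQ (a : A ⧸ O) (b : A ⧸ O)]
    group
  -- images of conjugate elements agree in the abelian quotient
  have hconj_eq : ∀ u v : A, IsConj u v → ((u : A ⧸ O) = (v : A ⧸ O)) := by
    rintro u v ⟨⟨cu, cu', hcu1, hcu2⟩, hcu⟩
    have h1 : cu * u = v * cu := hcu
    have h2' : ((cu * u : A) : A ⧸ O) = ((v * cu : A) : A ⧸ O) := by rw [h1]
    have h3 : (cu : A ⧸ O) * (u : A ⧸ O) = (v : A ⧸ O) * (cu : A ⧸ O) := by
      push_cast at h2' ⊢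
      exact h2'
    rw [hcommQ (v : A ⧸ O) (cu : A ⧸ O)] at h3
    exact mul_left_cancel h3
  have hsq : ((X : A ⧸ O)) ^ 2 = ((Y : A ⧸ O)) ^ 2 := by
    have := hconj_eq _ _ h2
    push_cast at this
    exact_mod_cast this
  have hrpow : ((X : A ⧸ O)) ^ r = ((Y : A ⧸ O)) ^ r := by
    have := hconj_eq _ _ hrconj
    push_cast at this
    exact_mod_cast this
  have hXYO : ((X : A ⧸ O)) = ((Y : A ⧸ O)) := by
    obtain ⟨t, ht⟩ := hodd
    set x := (X : A ⧸ O)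
    set y := (Y : A ⧸ O)
    have h2t : x ^ (2 * t) = y ^ (2 * t) := by
      rw [pow_mul, pow_mul, hsq]
    have hr' : x ^ (2 * t) * x = y ^ (2 * t) * y := by
      rw [← pow_succ, ← pow_succ, ← ht]
      exact hrpow
    rw [h2t] at hr'
    exact mul_left_cancel hr'
  exact hXYnc (aux_main O hOodd hcommA X Y hXYO h2)
end

section
/- Let r > 1 and s > 1 be coprime integers, and let G be a finite group containing elements x and y such that x^r is conjugate to y^r and x^s is conjugate to y^s, but x^d is not conjugate to y^d for every proper divisor d of r and every proper divisor d of s. Then rs divides the order of G. -/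
private lemma pow_eq_of_coprime {G : Type*} [Group G] [Finite G] {p : ℕ} {u v : G}
    (h : u ^ p = v ^ p) (hu : Nat.Coprime p (orderOf u)) (hv : Nat.Coprime p (orderOf v)) :
    u = v := by
  have hord : orderOf u = orderOf v := by
    have h1 : orderOf (u ^ p) = orderOf u := (hu.symm).orderOf_pow
    have h2 : orderOf (v ^ p) = orderOf v := (hv.symm).orderOf_pow
    rw [← h1, ← h2, h]
  rcases eq_or_lt_of_le (Nat.succ_le_of_lt (orderOf_pos u) : 1 ≤ orderOf u) with he | hlt
  · -- orderOf u = 1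
    have hu1 : u = 1 := orderOf_eq_one_iff.mp he.symm
    have hv1 : v = 1 := orderOf_eq_one_iff.mp (hord ▸ he.symm)
    rw [hu1, hv1]
  · obtain ⟨k, -, hk⟩ := Nat.exists_mul_mod_eq_one_of_coprime hu hlt
    have hmod : p * k ≡ 1 [MOD orderOf u] := by
      unfold Nat.ModEq
      rw [hk, Nat.mod_eq_of_lt hlt]
    calc u = u ^ (p * k) := by rw [pow_eq_pow_iff_modEq.mpr hmod, pow_one]
      _ = v ^ (p * k) := by rw [pow_mul, pow_mul, h]
      _ = v := by rw [pow_eq_pow_iff_modEq.mpr (hord ▸ hmod), pow_one]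

private lemma dvd_card_of_conj_pow {G : Type*} [Group G] [Finite G] (r : ℕ) (hr : 1 < r)
    (x y : G) (hxr : IsConj (x ^ r) (y ^ r))
    (hdr : ∀ d : ℕ, 0 < d → d ∣ r → d < r → ¬ IsConj (x ^ d) (y ^ d)) :
    r ∣ Nat.card G := by
  have hN : Nat.card G ≠ 0 := Nat.card_pos.ne'
  have hr0 : r ≠ 0 := by omega
  rw [← Nat.factorization_le_iff_dvd hr0 hN]
  intro p
  by_contra hab
  push_neg at hab
  have hp : p.Prime := by
    by_contra hpp
    rw [Nat.factorization_eq_zero_of_not_prime r hpp] at hab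
    omega
  have hb0 : r.factorization p ≠ 0 := by omega
  have hpr : p ∣ r := Nat.dvd_of_factorization_pos hb0
  -- key: order of z ^ (r/p) is coprime to p
  have key : ∀ z : G, ¬ p ∣ orderOf (z ^ (r / p)) := by
    intro z hcontra
    have hn0 : orderOf z ≠ 0 := (orderOf_pos z).ne'
    set n := orderOf z with hn
    have hcle : n.factorization p ≤ (Nat.card G).factorization p :=
      (Nat.factorization_le_iff_dvd hn0 hN).mpr (orderOf_dvd_natCard z) p
    have hsucc : p ^ (n.factorization p) * p ∣ r := by
      have h1 : p ^ (n.factorization p + 1) ∣ p ^ (r.factorization p) :=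
        pow_dvd_pow p (by omega)
      rw [pow_succ] at h1
      exact h1.trans (Nat.ordProj_dvd r p)
    have hdiv : p ^ (n.factorization p) ∣ r / p := by
      rw [Nat.dvd_div_iff_mul_dvd hpr]
      rwa [mul_comm] at hsucc
    have hzd : orderOf (z ^ (r / p)) ∣ ordCompl[p] n := by
      rw [orderOf_dvd_iff_pow_eq_one, ← pow_mul, ← orderOf_dvd_iff_pow_eq_one]
      calc n = p ^ (n.factorization p) * ordCompl[p] n :=
            (Nat.ordProj_mul_ordCompl_eq_self n p).symm
        _ ∣ (r / p) * ordCompl[p] n := mul_dvd_mul hdiv dvd_rfl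
    exact Nat.not_dvd_ordCompl hp hn0 (hcontra.trans hzd)
  rw [isConj_iff] at hxr
  obtain ⟨g, hg⟩ := hxr
  set v := g⁻¹ * y ^ (r / p) * g with hv
  have h2 : r / p * p = r := Nat.div_mul_cancel hpr
  have hvord : orderOf v = orderOf (y ^ (r / p)) := by
    have hsc : SemiconjBy g v (y ^ (r / p)) := by
      show g * v = y ^ (r / p) * g
      rw [hv]
      simp [mul_assoc]
    exact hsc.orderOf_eq
  have hvp : (x ^ (r / p)) ^ p = v ^ p := by
    have h1 : v ^ p = g⁻¹ * (y ^ (r / p)) ^ p * g := by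
      rw [hv]
      have := conj_pow (i := p) (a := g⁻¹) (b := y ^ (r / p))
      rwa [inv_inv] at this
    have h3 : g⁻¹ * y ^ r * g = x ^ r := by
      rw [← hg]
      simp [mul_assoc]
    rw [h1, ← pow_mul, ← pow_mul, h2, h3]
  have heq : x ^ (r / p) = v := by
    refine pow_eq_of_coprime hvp ?_ ?_
    · exact (Nat.Prime.coprime_iff_not_dvd hp).mpr (key x)
    · rw [hvord]
      exact (Nat.Prime.coprime_iff_not_dvd hp).mpr (key y)
  have hconj : IsConj (x ^ (r / p)) (y ^ (r / p)) := by
    rw [isConj_iff]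
    exact ⟨g, by rw [heq, hv]; simp [mul_assoc]⟩
  exact hdr (r / p) (Nat.div_pos (Nat.le_of_dvd (by omega) hpr) hp.pos)
    (Nat.div_dvd_of_dvd hpr) (Nat.div_lt_self (by omega) hp.one_lt) hconj

theorem stmt_2 {G : Type*} [Group G] [Finite G] (r s : ℕ) (hr : 1 < r) (hs : 1 < s)
    (hrs : Nat.Coprime r s) (x y : G)
    (hxr : IsConj (x ^ r) (y ^ r)) (hxs : IsConj (x ^ s) (y ^ s))
    (hdr : ∀ d : ℕ, 0 < d → d ∣ r → d < r → ¬ IsConj (x ^ d) (y ^ d))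
    (hds : ∀ d : ℕ, 0 < d → d ∣ s → d < s → ¬ IsConj (x ^ d) (y ^ d)) :
    r * s ∣ Nat.card G :=
  hrs.mul_dvd_of_dvd_of_dvd (dvd_card_of_conj_pow r hr x y hxr hdr)
    (dvd_card_of_conj_pow s hs x y hxs hds)
end

section
/- Let r > 1 and s > 1 be coprime integers, and let G be a finite group containing elements x and y such that x^r is conjugate to y^r and x^s is conjugate to y^s, but x^d is not conjugate to y^d for every proper divisor d of r and every proper divisor d of s. Then the order of G is strictly greater than rs. -/
private lemma conj_gcd_aux {G : Type*} [Group G] (x y c : G) (a m : ℕ)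
    (hxm : x ^ m = 1) (hym : y ^ m = 1) (h : c * x ^ a * c⁻¹ = y ^ a) :
    c * x ^ Nat.gcd a m * c⁻¹ = y ^ Nat.gcd a m := by
  have hd : (Nat.gcd a m : ℤ) = a * Nat.gcdA a m + m * Nat.gcdB a m := Nat.gcd_eq_gcd_ab a m
  have hx : x ^ Nat.gcd a m = (x ^ a) ^ Nat.gcdA a m := by
    rw [← zpow_natCast x (Nat.gcd a m), hd, zpow_add, zpow_mul, zpow_mul, zpow_natCast,
      zpow_natCast, hxm, one_zpow, mul_one]
  have hy : y ^ Nat.gcd a m = (y ^ a) ^ Nat.gcdA a m := by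
    rw [← zpow_natCast y (Nat.gcd a m), hd, zpow_add, zpow_mul, zpow_mul, zpow_natCast,
      zpow_natCast, hym, one_zpow, mul_one]
  rw [hx, hy, ← h, conj_zpow]

private lemma isConj_gcd_aux {G : Type*} [Group G] (x y : G) (a m : ℕ)
    (hxm : x ^ m = 1) (hym : y ^ m = 1) (h : IsConj (x ^ a) (y ^ a)) :
    IsConj (x ^ Nat.gcd a m) (y ^ Nat.gcd a m) := by
  obtain ⟨c, hc⟩ := isConj_iff.mp h
  exact isConj_iff.mpr ⟨c, conj_gcd_aux x y c a m hxm hym hc⟩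

theorem stmt_3 {G : Type*} [Group G] [Finite G] (r s : ℕ) (hr : 1 < r) (hs : 1 < s)
    (hrs : Nat.Coprime r s) (x y : G)
    (hxr : IsConj (x ^ r) (y ^ r)) (hxs : IsConj (x ^ s) (y ^ s))
    (hdr : ∀ d : ℕ, 0 < d → d ∣ r → d < r → ¬ IsConj (x ^ d) (y ^ d))
    (hds : ∀ d : ℕ, 0 < d → d ∣ s → d < s → ¬ IsConj (x ^ d) (y ^ d)) :
    r * s < Nat.card G := by
  set n := Nat.card G with hn
  have hn0 : 0 < n := Nat.card_pos
  have hxn : x ^ n = 1 := pow_card_eq_one'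
  have hyn : y ^ n = 1 := pow_card_eq_one'
  have key : ∀ a m : ℕ, 0 < a → 0 < m → x ^ m = 1 → y ^ m = 1 → IsConj (x ^ a) (y ^ a) →
      (∀ d : ℕ, 0 < d → d ∣ a → d < a → ¬ IsConj (x ^ d) (y ^ d)) → a ∣ m := by
    intro a m ha0 hm hxm hym hconj hmin
    have hgc := isConj_gcd_aux x y a m hxm hym hconj
    have hg1 : 0 < Nat.gcd a m := Nat.gcd_pos_of_pos_right a hm
    have hg2 : Nat.gcd a m ∣ a := Nat.gcd_dvd_left a m
    by_contra hnd
    have hlt : Nat.gcd a m < a := lt_of_le_of_ne (Nat.le_of_dvd ha0 hg2)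
      (fun he => hnd (he ▸ Nat.gcd_dvd_right a m))
    exact hmin _ hg1 hg2 hlt hgc
  have hrn : r ∣ n := key r n (by omega) hn0 hxn hyn hxr hdr
  have hsn : s ∣ n := key s n (by omega) hn0 hxn hyn hxs hds
  have hrsn : r * s ∣ n := Nat.Coprime.mul_dvd_of_dvd_of_dvd hrs hrn hsn
  rcases lt_or_eq_of_le (Nat.le_of_dvd hn0 hrsn) with h | h
  · exact h
  exfalso
  have hne : n = r * s := h.symm
  set a := orderOf x with ha
  set b := orderOf y with hb
  have ha0 : 0 < a := orderOf_pos x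
  have hb0 : 0 < b := orderOf_pos y
  have hgar : 0 < Nat.gcd a r := Nat.gcd_pos_of_pos_right a (by omega)
  have hgbr : 0 < Nat.gcd b r := Nat.gcd_pos_of_pos_right b (by omega)
  have hgas : 0 < Nat.gcd a s := Nat.gcd_pos_of_pos_right a (by omega)
  have hgbs : 0 < Nat.gcd b s := Nat.gcd_pos_of_pos_right b (by omega)
  have hax : a ∣ r * s := hne ▸ orderOf_dvd_natCard x
  have hbx : b ∣ r * s := hne ▸ orderOf_dvd_natCard y
  have hasplit : Nat.gcd a r * Nat.gcd a s = a :=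
    (Nat.gcd_mul_gcd_eq_iff_dvd_mul_of_coprime hrs).mpr hax
  have hbsplit : Nat.gcd b r * Nat.gcd b s = b :=
    (Nat.gcd_mul_gcd_eq_iff_dvd_mul_of_coprime hrs).mpr hbx
  have hordr : orderOf (x ^ r) = orderOf (y ^ r) := by
    obtain ⟨c, hc⟩ := hxr
    exact SemiconjBy.orderOf_eq (c : G) hc
  have hords : orderOf (x ^ s) = orderOf (y ^ s) := by
    obtain ⟨c, hc⟩ := hxs
    exact SemiconjBy.orderOf_eq (c : G) hc
  have hdiv : ∀ (z : G) (t u : ℕ), Nat.gcd (orderOf z) t * Nat.gcd (orderOf z) u = orderOf z →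
      0 < Nat.gcd (orderOf z) t → orderOf (z ^ t) = Nat.gcd (orderOf z) u := by
    intro z t u hsplit hpos
    rw [orderOf_pow z, ← Nat.mul_div_cancel_left (Nat.gcd (orderOf z) u) hpos, hsplit]
  have e1 : Nat.gcd a s = Nat.gcd b s := by
    rw [← hdiv x r s hasplit hgar, ← hdiv y r s hbsplit hgbr, hordr]
  have e2 : Nat.gcd a r = Nat.gcd b r := by
    rw [← hdiv x s r (by rw [mul_comm]; exact hasplit) hgas,
        ← hdiv y s r (by rw [mul_comm]; exact hbsplit) hgbs, hords]
  have hab : a = b := by rw [← hasplit, ← hbsplit, e1, e2]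
  -- x^a = 1 and y^a = 1
  have hxa : x ^ a = 1 := pow_orderOf_eq_one x
  have hya : y ^ a = 1 := by rw [hab]; exact pow_orderOf_eq_one y
  have hra : r ∣ a := key r a (by omega) ha0 hxa hya hxr hdr
  have hsa : s ∣ a := key s a (by omega) ha0 hxa hya hxs hds
  have hrsa : r * s ∣ a := Nat.Coprime.mul_dvd_of_dvd_of_dvd hrs hra hsa
  have han : a = n := hne ▸ Nat.dvd_antisymm hax hrsa
  -- G is generated by x
  have htop : Subgroup.zpowers x = ⊤ := by
    apply Subgroup.eq_top_of_card_eq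
    rw [Nat.card_zpowers, ← ha, han]
  have hmem : ∀ g : G, g ∈ Subgroup.zpowers x := by
    intro g; rw [htop]; trivial
  have hcomm : ∀ (g : G) (t : ℕ), g * x ^ t * g⁻¹ = x ^ t := by
    intro g t
    obtain ⟨k, hk⟩ := hmem g
    have : Commute g (x ^ t) := by
      rw [← hk]; exact (Commute.refl x).zpow_left k |>.pow_right t
    rw [this.eq, mul_assoc, mul_inv_cancel, mul_one]
  have hxr' : x ^ r = y ^ r := by
    obtain ⟨c, hc⟩ := isConj_iff.mp hxr
    rw [← hc, hcomm]
  have hxs' : x ^ s = y ^ s := by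
    obtain ⟨c, hc⟩ := isConj_iff.mp hxs
    rw [← hc, hcomm]
  -- Bezout: x = y
  have hbez : (1 : ℤ) = r * Nat.gcdA r s + s * Nat.gcdB r s := by
    have := Nat.gcd_eq_gcd_ab r s
    rwa [hrs] at this
  have hxy : x = y := by
    have hx1 : x = (x ^ r) ^ Nat.gcdA r s * (x ^ s) ^ Nat.gcdB r s := by
      rw [← zpow_natCast x r, ← zpow_natCast x s, ← zpow_mul, ← zpow_mul, ← zpow_add, ← hbez,
        zpow_one]
    have hy1 : y = (y ^ r) ^ Nat.gcdA r s * (y ^ s) ^ Nat.gcdB r s := by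
      rw [← zpow_natCast y r, ← zpow_natCast y s, ← zpow_mul, ← zpow_mul, ← zpow_add, ← hbez,
        zpow_one]
    rw [hx1, hy1, hxr', hxs']
  exact hdr 1 one_pos (one_dvd r) hr (by rw [pow_one, pow_one, hxy])
end

section
/- Let r > 1 and s > 1 be coprime integers with rs congruent to 2 modulo 4, and let G be a finite group containing elements x and y such that x^r is conjugate to y^r and x^s is conjugate to y^s, but x^d is not conjugate to y^d for every proper divisor d of r and every proper divisor d of s. Then 2rs divides the order of G. -/
private lemma aux_isConj_pow {G : Type*} [Group G] {a b : G} (h : IsConj a b) (k : ℕ) :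
    IsConj (a ^ k) (b ^ k) := by
  obtain ⟨c, hc⟩ := isConj_iff.mp h
  exact isConj_iff.mpr ⟨c, by rw [← hc, conj_pow]⟩

private lemma aux_isConj_gcd {G : Type*} [Group G] {x y : G} {d L : ℕ}
    (hL1 : x ^ L = 1) (hL2 : y ^ L = 1) (h : IsConj (x ^ d) (y ^ d)) :
    IsConj (x ^ Nat.gcd d L) (y ^ Nat.gcd d L) := by
  obtain ⟨c, hc⟩ := isConj_iff.mp h
  have key : ∀ z : G, z ^ L = 1 → z ^ Nat.gcd d L = (z ^ d) ^ Nat.gcdA d L := by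
    intro z hz
    calc z ^ Nat.gcd d L = z ^ ((Nat.gcd d L : ℤ)) := (zpow_natCast z _).symm
      _ = z ^ ((d : ℤ) * Nat.gcdA d L + (L : ℤ) * Nat.gcdB d L) := by
          rw [← Nat.gcd_eq_gcd_ab]
      _ = (z ^ (d : ℤ)) ^ Nat.gcdA d L * (z ^ (L : ℤ)) ^ Nat.gcdB d L := by
          rw [zpow_add, zpow_mul, zpow_mul]
      _ = (z ^ d) ^ Nat.gcdA d L := by
          rw [zpow_natCast, zpow_natCast, hz, one_zpow, mul_one]
  refine isConj_iff.mpr ⟨c, ?_⟩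
  rw [key x hL1, key y hL2, ← hc, conj_zpow]

open Pointwise in
private lemma aux_conj_involution {K : Type*} [Group K] [Finite K]
    (h4 : ¬ (4 ∣ Nat.card K)) {t t' : K} (ht : orderOf t = 2) (ht' : orderOf t' = 2) :
    ∃ w : K, w * t' * w⁻¹ = t := by
  have : Fact (Nat.Prime 2) := ⟨Nat.prime_two⟩
  have := Fintype.ofFinite K
  have hzp : ∀ z : K, orderOf z = 2 → IsPGroup 2 (Subgroup.zpowers z) := by
    intro z hz
    exact IsPGroup.iff_card.mpr ⟨1, by rw [Nat.card_zpowers, hz, pow_one]⟩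
  obtain ⟨Q, hQ⟩ := (hzp t ht).exists_le_sylow
  obtain ⟨Q', hQ'⟩ := (hzp t' ht').exists_le_sylow
  obtain ⟨g, hg⟩ := MulAction.exists_smul_eq K Q' Q
  have hn0 : Nat.card K ≠ 0 := Nat.card_pos.ne'
  have h2dvd : 2 ∣ Nat.card K := ht ▸ orderOf_dvd_natCard t
  have hfact : (Nat.card K).factorization 2 = 1 := by
    have h1 : 1 ≤ (Nat.card K).factorization 2 :=
      (Nat.Prime.pow_dvd_iff_le_factorization Nat.prime_two hn0).mp (by simpa using h2dvd)
    have h2 : ¬ 2 ≤ (Nat.card K).factorization 2 := by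
      intro h
      exact h4 (by simpa using (Nat.Prime.pow_dvd_iff_le_factorization Nat.prime_two hn0).mpr h)
    omega
  have hcardQ : Nat.card Q = 2 := by
    rw [Q.card_eq_multiplicity, hfact, pow_one]
  have hzQ : Subgroup.zpowers t = (Q : Subgroup K) := by
    refine Subgroup.eq_of_le_of_card_ge hQ ?_
    rw [hcardQ, Nat.card_zpowers, ht]
  have hmem : g * t' * g⁻¹ ∈ (Q : Subgroup K) := by
    rw [← hg, Sylow.coe_subgroup_smul]
    have h5 : MulAut.conj g • t' ∈ MulAut.conj g • (Q' : Subgroup K) :=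
      Subgroup.smul_mem_pointwise_smul_iff.mpr (hQ' (Subgroup.mem_zpowers t'))
    simpa [MulAut.smul_def, MulAut.conj_apply] using h5
  rw [← hzQ] at hmem
  obtain ⟨k, hk⟩ := Subgroup.mem_zpowers_iff.mp hmem
  have ht2 : t ^ (2 : ℕ) = 1 := ht ▸ pow_orderOf_eq_one t
  have ht2z : t ^ (2 : ℤ) = 1 := by
    rw [show ((2 : ℤ)) = ((2 : ℕ) : ℤ) by norm_num, zpow_natCast, ht2]
  have ht'ne : t' ≠ 1 := by
    intro h; rw [h, orderOf_one] at ht'; omega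
  refine ⟨g, ?_⟩
  rcases Int.even_or_odd k with ⟨m, hm⟩ | ⟨m, hm⟩
  · exfalso
    have hk1 : t ^ k = 1 := by
      rw [hm, show m + m = 2 * m by ring, zpow_mul, ht2z, one_zpow]
    have h1 : g * t' * g⁻¹ = 1 := hk.symm.trans hk1
    apply ht'ne
    have : t' = g⁻¹ * (g * t' * g⁻¹) * g := by group
    rw [this, h1]; group
  · rw [← hk, hm, zpow_add, zpow_mul, ht2z, one_zpow, one_mul, zpow_one]

private lemma aux_isConj_orderOf {G : Type*} [Group G] {a b : G} (h : IsConj a b) :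
    orderOf a = orderOf b := by
  obtain ⟨c, hc⟩ := isConj_iff.mp h
  exact SemiconjBy.orderOf_eq c (by rw [SemiconjBy, ← hc]; group)

private lemma aux_parity {ox s : ℕ} (hs : s % 2 = 1) :
    (2 ∣ ox ↔ 2 ∣ ox / Nat.gcd ox s) := by
  have hgodd : ¬ 2 ∣ Nat.gcd ox s := by
    intro h
    have : 2 ∣ s := h.trans (Nat.gcd_dvd_right _ _)
    omega
  have heq : Nat.gcd ox s * (ox / Nat.gcd ox s) = ox :=
    Nat.mul_div_cancel' (Nat.gcd_dvd_left _ _)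
  constructor
  · intro h
    rw [← heq] at h
    exact ((Nat.Prime.dvd_mul Nat.prime_two).mp h).resolve_left hgodd
  · intro h
    exact h.trans (Nat.div_dvd_of_dvd (Nat.gcd_dvd_left _ _))

private lemma aux_key {G : Type*} [Group G] [Finite G] (r s : ℕ) (hr4 : r % 4 = 2)
    (hs2 : s % 2 = 1) (x y : G) (hxr : IsConj (x ^ r) (y ^ r)) (hxs : IsConj (x ^ s) (y ^ s))
    (hdr : ∀ d : ℕ, 0 < d → d ∣ r → d < r → ¬ IsConj (x ^ d) (y ^ d))
    (hrL : r ∣ Nat.lcm (orderOf x) (orderOf y)) (h4 : ¬ 4 ∣ Nat.card G) : False := by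
  have hfact2 : Fact (Nat.Prime 2) := ⟨Nat.prime_two⟩
  set ox := orderOf x with hox
  set oy := orderOf y with hoy
  have hoxpos : 0 < ox := orderOf_pos x
  have hoypos : 0 < oy := orderOf_pos y
  have hxox : x ^ ox = 1 := pow_orderOf_eq_one x
  have hyoy : y ^ oy = 1 := pow_orderOf_eq_one y
  -- both orders are even
  have h2L : 2 ∣ Nat.lcm ox oy := dvd_trans ⟨r / 2, by omega⟩ hrL
  have h2m : 2 ∣ ox ∨ 2 ∣ oy :=
    (Nat.Prime.dvd_mul Nat.prime_two).mp (h2L.trans (Nat.lcm_dvd_mul ox oy))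
  have hpows : orderOf (x ^ s) = orderOf (y ^ s) := aux_isConj_orderOf hxs
  have hpx : orderOf (x ^ s) = ox / Nat.gcd ox s := by rw [orderOf_pow]
  have hpy : orderOf (y ^ s) = oy / Nat.gcd oy s := by rw [orderOf_pow]
  have hiff : 2 ∣ ox ↔ 2 ∣ oy := by
    rw [aux_parity hs2, ← hpx, hpows, hpy, ← aux_parity hs2]
  have h2ox : 2 ∣ ox := by
    rcases h2m with h | h
    · exact h
    · exact hiff.mpr h
  have h2oy : 2 ∣ oy := hiff.mp h2ox
  -- u, v odd halves
  obtain ⟨u, hu⟩ := h2ox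
  obtain ⟨v, hv⟩ := h2oy
  have hupos : 0 < u := by omega
  have hvpos : 0 < v := by omega
  have hndvd : ∀ w : ℕ, w ∣ Nat.card G → ¬ 4 ∣ w := fun w hw h' => h4 (h'.trans hw)
  have huodd : u % 2 = 1 := by
    have h1 := hndvd ox (orderOf_dvd_natCard x)
    rcases Nat.even_or_odd u with ⟨k, hk⟩ | h
    · exact absurd ⟨k, by omega⟩ h1
    · omega
  have hvodd : v % 2 = 1 := by
    have h1 := hndvd oy (orderOf_dvd_natCard y)
    rcases Nat.even_or_odd v with ⟨k, hk⟩ | h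
    · exact absurd ⟨k, by omega⟩ h1
    · omega
  -- r = 2 r', r' odd
  obtain ⟨r', hr'e, hr'odd⟩ : ∃ k, r = 2 * k ∧ k % 2 = 1 := ⟨r / 2, by omega, by omega⟩
  -- involutions
  set t := x ^ u with htdef
  set ty := y ^ v with htydef
  have ht2 : t ^ 2 = 1 := by rw [htdef, ← pow_mul, show u * 2 = ox by omega, hxox]
  have hty2 : ty ^ 2 = 1 := by rw [htydef, ← pow_mul, show v * 2 = oy by omega, hyoy]
  have htne : t ≠ 1 := by
    intro h
    have := Nat.le_of_dvd hupos (orderOf_dvd_iff_pow_eq_one.mpr h)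
    omega
  have htyne : ty ≠ 1 := by
    intro h
    have := Nat.le_of_dvd hvpos (orderOf_dvd_iff_pow_eq_one.mpr h)
    omega
  have ht : orderOf t = 2 := orderOf_eq_prime ht2 htne
  have hty : orderOf ty = 2 := orderOf_eq_prime hty2 htyne
  -- odd parts
  set xo := x ^ (u + 1) with hxodef
  set yo := y ^ (v + 1) with hyodef
  have hmulxr : (u + 1) * r = ox * r' + r := by rw [hr'e, hu]; ring
  have hmulyr : (v + 1) * r = oy * r' + r := by rw [hr'e, hv]; ring
  have hxro : xo ^ r = x ^ r := by
    rw [hxodef, ← pow_mul, hmulxr, pow_add, pow_mul, hxox, one_pow, one_mul]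
  have hyro : yo ^ r = y ^ r := by
    rw [hyodef, ← pow_mul, hmulyr, pow_add, pow_mul, hyoy, one_pow, one_mul]
  have hconj_or : IsConj (xo ^ r) (yo ^ r) := by rw [hxro, hyro]; exact hxr
  obtain ⟨w₁, hw₁⟩ : ∃ w, u + 1 = 2 * w := ⟨(u + 1) / 2, by omega⟩
  obtain ⟨w₂, hw₂⟩ : ∃ w, v + 1 = 2 * w := ⟨(v + 1) / 2, by omega⟩
  have hxou : xo ^ u = 1 := by
    rw [hxodef, ← pow_mul, show (u + 1) * u = ox * w₁ by rw [hw₁, hu]; ring,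
      pow_mul, hxox, one_pow]
  have hyov : yo ^ v = 1 := by
    rw [hyodef, ← pow_mul, show (v + 1) * v = oy * w₂ by rw [hw₂, hv]; ring,
      pow_mul, hyoy, one_pow]
  -- halving in the odd part
  set Lo := Nat.lcm u v with hLo
  have hLopos : 0 < Lo := Nat.lcm_pos hupos hvpos
  have hLoodd : Lo % 2 = 1 := by
    rcases Nat.even_or_odd Lo with ⟨k, hk⟩ | ⟨k, hk⟩
    · exfalso
      have h2Lo : 2 ∣ Lo := ⟨k, by omega⟩
      have h2 : 2 ∣ u * v := h2Lo.trans (Nat.lcm_dvd_mul u v)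
      rcases (Nat.Prime.dvd_mul Nat.prime_two).mp h2 with h | h <;> omega
    · omega
  have hxoLo : xo ^ Lo = 1 := by
    obtain ⟨k, hk⟩ : u ∣ Lo := Nat.dvd_lcm_left u v
    rw [hk, pow_mul, hxou, one_pow]
  have hyoLo : yo ^ Lo = 1 := by
    obtain ⟨k, hk⟩ : v ∣ Lo := Nat.dvd_lcm_right u v
    rw [hk, pow_mul, hyov, one_pow]
  obtain ⟨c, hc2⟩ : ∃ c, Lo + 1 = 2 * c := ⟨(Lo + 1) / 2, by omega⟩
  have hk1 : r' * (Lo + 1) = r * c := by rw [hc2, hr'e]; ring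
  have hk2 : r' * (Lo + 1) = Lo * r' + r' := by ring
  have hxhalf : (xo ^ r) ^ c = xo ^ r' := by
    calc (xo ^ r) ^ c = xo ^ (r * c) := (pow_mul xo r c).symm
      _ = xo ^ (Lo * r' + r') := by rw [← hk1, hk2]
      _ = (xo ^ Lo) ^ r' * xo ^ r' := by rw [pow_add, pow_mul]
      _ = xo ^ r' := by rw [hxoLo, one_pow, one_mul]
  have hyhalf : (yo ^ r) ^ c = yo ^ r' := by
    calc (yo ^ r) ^ c = yo ^ (r * c) := (pow_mul yo r c).symm
      _ = yo ^ (Lo * r' + r') := by rw [← hk1, hk2]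
      _ = (yo ^ Lo) ^ r' * yo ^ r' := by rw [pow_add, pow_mul]
      _ = yo ^ r' := by rw [hyoLo, one_pow, one_mul]
  have hconj_half : IsConj (xo ^ r') (yo ^ r') := by
    rw [← hxhalf, ← hyhalf]; exact aux_isConj_pow hconj_or c
  set a := xo ^ r' with hadef
  set b := yo ^ r' with hbdef
  obtain ⟨g₀, hg₀⟩ : ∃ g₀ : G, g₀ * b * g₀⁻¹ = a := isConj_iff.mp hconj_half.symm
  -- commutation facts
  have hta : t * a = a * t := by
    rw [htdef, hadef, hxodef, ← pow_mul, ← pow_add, ← pow_add, Nat.add_comm]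
  have htyb : ty * b = b * ty := by
    rw [htydef, hbdef, hyodef, ← pow_mul, ← pow_add, ← pow_add, Nat.add_comm]
  set t' := g₀ * ty * g₀⁻¹ with ht'def
  have ht'a : t' * a = a * t' := by
    calc t' * a = g₀ * (ty * b) * g₀⁻¹ := by rw [ht'def, ← hg₀]; group
      _ = g₀ * (b * ty) * g₀⁻¹ := by rw [htyb]
      _ = a * t' := by rw [ht'def, ← hg₀]; group
  have ht'2 : t' ^ 2 = 1 := by rw [ht'def, conj_pow, hty2, mul_one, mul_inv_cancel]
  have ht'ne : t' ≠ 1 := by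
    intro h
    apply htyne
    have h1 : ty = g₀⁻¹ * (g₀ * ty * g₀⁻¹) * g₀ := by group
    rw [h1, ← ht'def, h]
    group
  have ht' : orderOf t' = 2 := orderOf_eq_prime ht'2 ht'ne
  -- move to the centralizer of a
  set K := Subgroup.centralizer ({a} : Set G) with hKdef
  have htK : t ∈ K := Subgroup.mem_centralizer_singleton_iff.mpr hta
  have ht'K : t' ∈ K := Subgroup.mem_centralizer_singleton_iff.mpr ht'a
  have h4K : ¬ 4 ∣ Nat.card K := hndvd _ (Subgroup.card_subgroup_dvd_card K)
  have horder_t : orderOf (⟨t, htK⟩ : K) = 2 := by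
    have h5 := orderOf_injective K.subtype Subtype.coe_injective ⟨t, htK⟩
    simp only [Subgroup.coe_subtype] at h5
    rw [← h5]; exact ht
  have horder_t' : orderOf (⟨t', ht'K⟩ : K) = 2 := by
    have h5 := orderOf_injective K.subtype Subtype.coe_injective ⟨t', ht'K⟩
    simp only [Subgroup.coe_subtype] at h5
    rw [← h5]; exact ht'
  obtain ⟨w, hw⟩ := aux_conj_involution h4K horder_t horder_t'
  have hwG : (w : G) * t' * (w : G)⁻¹ = t := by
    have h5 := congrArg (Subtype.val) hw
    simpa using h5
  have hwa : (w : G) * a = a * (w : G) := Subgroup.mem_centralizer_singleton_iff.mp w.2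
  set g := (w : G) * g₀ with hgdef
  have hgty : g * ty * g⁻¹ = t := by
    calc g * ty * g⁻¹ = (w : G) * (g₀ * ty * g₀⁻¹) * (w : G)⁻¹ := by rw [hgdef]; group
      _ = t := by rw [← ht'def, hwG]
  have hgb : g * b * g⁻¹ = a := by
    calc g * b * g⁻¹ = (w : G) * (g₀ * b * g₀⁻¹) * (w : G)⁻¹ := by rw [hgdef]; group
      _ = (w : G) * a * (w : G)⁻¹ := by rw [hg₀]
      _ = a * (w : G) * (w : G)⁻¹ := by rw [hwa]
      _ = a := by group
  -- reassemble
  obtain ⟨e, he⟩ : ∃ e, r' + 1 = 2 * e := ⟨(r' + 1) / 2, by omega⟩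
  have hxr' : t * a = x ^ r' := by
    rw [htdef, hadef, hxodef, ← pow_mul, ← pow_add,
      show u + (u + 1) * r' = ox * e + r' from by
        calc u + (u + 1) * r' = u * (r' + 1) + r' := by ring
          _ = u * (2 * e) + r' := by rw [he]
          _ = ox * e + r' := by rw [hu]; ring,
      pow_add, pow_mul, hxox, one_pow, one_mul]
  have hyr' : ty * b = y ^ r' := by
    rw [htydef, hbdef, hyodef, ← pow_mul, ← pow_add,
      show v + (v + 1) * r' = oy * e + r' from by
        calc v + (v + 1) * r' = v * (r' + 1) + r' := by ring
          _ = v * (2 * e) + r' := by rw [he]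
          _ = oy * e + r' := by rw [hv]; ring,
      pow_add, pow_mul, hyoy, one_pow, one_mul]
  have hfinal : g * y ^ r' * g⁻¹ = x ^ r' := by
    calc g * y ^ r' * g⁻¹ = g * (ty * b) * g⁻¹ := by rw [hyr']
      _ = (g * ty * g⁻¹) * (g * b * g⁻¹) := by group
      _ = t * a := by rw [hgty, hgb]
      _ = x ^ r' := hxr'
  exact hdr r' (by omega) ⟨2, by omega⟩ (by omega)
    (IsConj.symm (isConj_iff.mpr ⟨g, hfinal⟩))

private lemma aux_dvd_L {G : Type*} [Group G] (r : ℕ) (hrpos : 0 < r) (x y : G)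
    (hxr : IsConj (x ^ r) (y ^ r))
    (hdr : ∀ d : ℕ, 0 < d → d ∣ r → d < r → ¬ IsConj (x ^ d) (y ^ d)) :
    r ∣ Nat.lcm (orderOf x) (orderOf y) := by
  set L := Nat.lcm (orderOf x) (orderOf y) with hL
  have hxL : x ^ L = 1 := orderOf_dvd_iff_pow_eq_one.mp (Nat.dvd_lcm_left _ _)
  have hyL : y ^ L = 1 := orderOf_dvd_iff_pow_eq_one.mp (Nat.dvd_lcm_right _ _)
  have hg := aux_isConj_gcd hxL hyL hxr
  have hpos : 0 < Nat.gcd r L := Nat.gcd_pos_of_pos_left L hrpos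
  rcases lt_or_ge (Nat.gcd r L) r with h | h
  · exact absurd hg (hdr _ hpos (Nat.gcd_dvd_left r L) h)
  · have heq : Nat.gcd r L = r :=
      le_antisymm (Nat.le_of_dvd hrpos (Nat.gcd_dvd_left r L)) h
    rw [← heq]
    exact Nat.gcd_dvd_right r L

theorem stmt_4 {G : Type*} [Group G] [Finite G] (r s : ℕ) (hr : 1 < r) (hs : 1 < s)
    (hrs : Nat.Coprime r s) (hmod : r * s % 4 = 2) (x y : G)
    (hxr : IsConj (x ^ r) (y ^ r)) (hxs : IsConj (x ^ s) (y ^ s))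
    (hdr : ∀ d : ℕ, 0 < d → d ∣ r → d < r → ¬ IsConj (x ^ d) (y ^ d))
    (hds : ∀ d : ℕ, 0 < d → d ∣ s → d < s → ¬ IsConj (x ^ d) (y ^ d)) :
    2 * (r * s) ∣ Nat.card G := by
  have hrL : r ∣ Nat.lcm (orderOf x) (orderOf y) := aux_dvd_L r (by omega) x y hxr hdr
  have hsL : s ∣ Nat.lcm (orderOf x) (orderOf y) := aux_dvd_L s (by omega) x y hxs hds
  have hrsL : r * s ∣ Nat.lcm (orderOf x) (orderOf y) :=
    hrs.mul_dvd_of_dvd_of_dvd hrL hsL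
  have hLn : Nat.lcm (orderOf x) (orderOf y) ∣ Nat.card G :=
    Nat.lcm_dvd (orderOf_dvd_natCard x) (orderOf_dvd_natCard y)
  have hrsn : r * s ∣ Nat.card G := hrsL.trans hLn
  by_cases h4 : 4 ∣ Nat.card G
  · obtain ⟨m, hm⟩ := hrsn
    obtain ⟨j, hj⟩ := h4
    obtain ⟨w, hw⟩ : ∃ w, r * s = 4 * w + 2 := ⟨r * s / 4, by omega⟩
    rcases Nat.even_or_odd m with ⟨k, hk⟩ | ⟨k, hk⟩
    · exact ⟨k, by rw [hm, hk]; ring⟩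
    · exfalso
      have : Nat.card G = 4 * (2 * w * k + w + k) + 2 := by rw [hm, hw, hk]; ring
      omega
  · exfalso
    have h24 : r % 4 * (s % 4) % 4 = 2 := by rw [← Nat.mul_mod]; exact hmod
    have hr4 : r % 4 = 0 ∨ r % 4 = 1 ∨ r % 4 = 2 ∨ r % 4 = 3 := by omega
    have hs4 : s % 4 = 0 ∨ s % 4 = 1 ∨ s % 4 = 2 ∨ s % 4 = 3 := by omega
    rcases hr4 with h1 | h1 | h1 | h1 <;> rcases hs4 with h2 | h2 | h2 | h2 <;>
      rw [h1, h2] at h24 <;> norm_num at h24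
    · exact aux_key s r h2 (by omega) x y hxs hxr hds hsL h4
    · exact aux_key r s h1 (by omega) x y hxr hxs hdr hrL h4
    · exact aux_key r s h1 (by omega) x y hxr hxs hdr hrL h4
    · exact aux_key s r h2 (by omega) x y hxs hxr hds hsL h4
end

section
/- Let r > 1 and s > 1 be coprime integers with rs even, and let G be a finite group containing elements x and y such that x^r is conjugate to y^r and x^s is conjugate to y^s, but x^d is not conjugate to y^d for every proper divisor d of r and every proper divisor d of s. Then the order of G is not equal to 2rs. -/
private lemma fact_aux {m n r : ℕ} (hm : m ≠ 0) (hn : n ≠ 0) (hr : r ≠ 0)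
    (h : m / Nat.gcd m r = n / Nat.gcd n r) {p : ℕ}
    (hp : r.factorization p = 0) : m.factorization p = n.factorization p := by
  have e1 : (m / Nat.gcd m r).factorization p = m.factorization p := by
    rw [Nat.factorization_div (Nat.gcd_dvd_left m r), Finsupp.tsub_apply,
      Nat.factorization_gcd hm hr, Finsupp.inf_apply, hp]
    simp
  have e2 : (n / Nat.gcd n r).factorization p = n.factorization p := by
    rw [Nat.factorization_div (Nat.gcd_dvd_left n r), Finsupp.tsub_apply,
      Nat.factorization_gcd hn hr, Finsupp.inf_apply, hp]
    simp
  rw [← e1, ← e2, h]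

private lemma order_eq_aux {m n r s : ℕ} (hm : m ≠ 0) (hn : n ≠ 0) (hr : r ≠ 0) (hs : s ≠ 0)
    (hco : Nat.Coprime r s)
    (h1 : m / Nat.gcd m r = n / Nat.gcd n r) (h2 : m / Nat.gcd m s = n / Nat.gcd n s) :
    m = n := by
  have key : ∀ p : ℕ, m.factorization p = n.factorization p := by
    intro p
    by_cases hp : r.factorization p = 0
    · exact fact_aux hm hn hr h1 hp
    · have hps : s.factorization p = 0 := by
        by_contra hq
        have h1' : p ∣ r := Nat.dvd_of_factorization_pos hp
        have h2' : p ∣ s := Nat.dvd_of_factorization_pos hq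
        have hpp : p.Prime := by
          by_contra hnp
          exact hp (Nat.factorization_eq_zero_of_not_prime r hnp)
        have : p ∣ Nat.gcd r s := Nat.dvd_gcd h1' h2'
        rw [hco] at this
        exact hpp.one_lt.ne' (Nat.dvd_one.mp this)
      exact fact_aux hm hn hs h2 hps
  exact Nat.dvd_antisymm
    ((Nat.factorization_le_iff_dvd hm hn).mp (Finsupp.le_def.mpr fun p => (key p).le))
    ((Nat.factorization_le_iff_dvd hn hm).mp (Finsupp.le_def.mpr fun p => (key p).ge))

theorem stmt_5 {G : Type*} [Group G] [Finite G] (r s : ℕ) (hr : 1 < r) (hs : 1 < s)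
    (hrs : Nat.Coprime r s) (heven : Even (r * s)) (x y : G)
    (hxr : IsConj (x ^ r) (y ^ r)) (hxs : IsConj (x ^ s) (y ^ s))
    (hdr : ∀ d : ℕ, 0 < d → d ∣ r → d < r → ¬ IsConj (x ^ d) (y ^ d))
    (hds : ∀ d : ℕ, 0 < d → d ∣ s → d < s → ¬ IsConj (x ^ d) (y ^ d)) :
    Nat.card G ≠ 2 * (r * s) := by
  intro hcard
  have hr0 : 0 < r := by omega
  have hs0 : 0 < s := by omega
  have hrs0 : 0 < r * s := Nat.mul_pos hr0 hs0
  set m := orderOf x with hm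
  set n := orderOf y with hn
  have hmpos : 0 < m := orderOf_pos x
  have hnpos : 0 < n := orderOf_pos y
  -- conjugation preserves zpow
  have conjz : ∀ (a b : G) (k : ℤ), IsConj a b → IsConj (a ^ k) (b ^ k) := by
    intro a b k h
    obtain ⟨c, hc⟩ := isConj_iff.1 h
    exact isConj_iff.2 ⟨c, by rw [← hc, conj_zpow]⟩
  -- orders of conjugate elements agree
  have hord : ∀ (a b : G), IsConj a b → orderOf a = orderOf b := by
    intro a b h
    obtain ⟨c, hc⟩ := isConj_iff.1 h
    refine SemiconjBy.orderOf_eq c ?_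
    show c * a = b * c
    rw [← hc]
    group
  -- ord x = ord y
  have hmn : m = n := by
    have h1 : m / Nat.gcd m r = n / Nat.gcd n r := by
      have := hord _ _ hxr
      rwa [orderOf_pow, orderOf_pow, ← hm, ← hn] at this
    have h2 : m / Nat.gcd m s = n / Nat.gcd n s := by
      have := hord _ _ hxs
      rwa [orderOf_pow, orderOf_pow, ← hm, ← hn] at this
    exact order_eq_aux hmpos.ne' hnpos.ne' hr0.ne' hs0.ne' hrs h1 h2
  -- r ∣ m and s ∣ m
  have hdvd_gen : ∀ (r' : ℕ), 1 < r' → IsConj (x ^ r') (y ^ r') →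
      (∀ d : ℕ, 0 < d → d ∣ r' → d < r' → ¬ IsConj (x ^ d) (y ^ d)) → r' ∣ m := by
    intro r' hr' hconj hd
    set g := Nat.gcd r' m with hg
    have hgpos : 0 < g := Nat.gcd_pos_of_pos_left m (by omega)
    have hb := Nat.gcd_eq_gcd_ab r' m
    have hxg : x ^ g = (x ^ r') ^ (Nat.gcdA r' m) := by
      calc x ^ g = x ^ ((g : ℤ)) := (zpow_natCast x g).symm
      _ = x ^ ((r' : ℤ) * Nat.gcdA r' m + (m : ℤ) * Nat.gcdB r' m) := by rw [← hb]
      _ = (x ^ (r' : ℤ)) ^ Nat.gcdA r' m * (x ^ (m : ℤ)) ^ Nat.gcdB r' m := by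
          rw [zpow_add, zpow_mul, zpow_mul]
      _ = (x ^ r') ^ Nat.gcdA r' m := by
          rw [zpow_natCast, zpow_natCast, hm, pow_orderOf_eq_one]
          simp
    have hyg : y ^ g = (y ^ r') ^ (Nat.gcdA r' m) := by
      calc y ^ g = y ^ ((g : ℤ)) := (zpow_natCast y g).symm
      _ = y ^ ((r' : ℤ) * Nat.gcdA r' m + (m : ℤ) * Nat.gcdB r' m) := by rw [← hb]
      _ = (y ^ (r' : ℤ)) ^ Nat.gcdA r' m * (y ^ (m : ℤ)) ^ Nat.gcdB r' m := by
          rw [zpow_add, zpow_mul, zpow_mul]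
      _ = (y ^ r') ^ Nat.gcdA r' m := by
          rw [zpow_natCast, zpow_natCast, hmn, hn, pow_orderOf_eq_one]
          simp
    have hconjg : IsConj (x ^ g) (y ^ g) := by
      rw [hxg, hyg]
      exact conjz _ _ _ hconj
    by_contra hnd
    have hglt : g < r' := lt_of_le_of_ne (Nat.le_of_dvd (by omega) (Nat.gcd_dvd_left _ _))
      (fun he => hnd (he ▸ Nat.gcd_dvd_right r' m))
    exact hd g hgpos (Nat.gcd_dvd_left _ _) hglt hconjg
  have hrm : r ∣ m := hdvd_gen r hr hxr hdr
  have hsm : s ∣ m := hdvd_gen s hs hxs hds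
  have hrsm : r * s ∣ m := Nat.Coprime.mul_dvd_of_dvd_of_dvd hrs hrm hsm
  have hm2rs : m ∣ 2 * (r * s) := by
    rw [← hcard, hm]
    exact orderOf_dvd_natCard x
  obtain ⟨k, hk⟩ := hrsm
  have hk2 : k ∣ 2 := by
    rw [hk] at hm2rs
    rw [mul_comm 2 (r * s)] at hm2rs
    exact (Nat.mul_dvd_mul_iff_left hrs0).mp hm2rs
  have hcoZ : IsCoprime (r : ℤ) (s : ℤ) := Nat.isCoprime_iff_coprime.mpr hrs
  have hrZ0 : (r : ℤ) ≠ 0 := by exact_mod_cast hr0.ne'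
  have hsZ0 : (s : ℤ) ≠ 0 := by exact_mod_cast hs0.ne'
  -- helper congruence facts
  have hdv : ∀ a b : ℤ, x ^ a = x ^ b → (m : ℤ) ∣ b - a := by
    intro a b h
    have := zpow_eq_zpow_iff_modEq.mp h
    rw [← hm] at this
    exact Int.ModEq.dvd this
  have hdv2 : ∀ a b : ℤ, (m : ℤ) ∣ b - a → x ^ a = x ^ b := by
    intro a b h
    refine zpow_eq_zpow_iff_modEq.mpr ?_
    rw [← hm]
    exact Int.modEq_iff_dvd.mpr h
  have hk1 : k = 1 ∨ k = 2 := by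
    have hkle : k ≤ 2 := Nat.le_of_dvd (by norm_num) hk2
    interval_cases k
    · simp at hk2
    · left; rfl
    · right; rfl
  rcases hk1 with hk1 | hk1
  · -- m = r * s : index two case
    rw [hk1, mul_one] at hk
    set C := Subgroup.zpowers x with hC
    have hg1 : Nat.gcd r s = 1 := hrs
    have hCcard : Nat.card C = r * s := by rw [hC, Nat.card_zpowers, ← hm, hk]
    have hindex : C.index = 2 := by
      have h1 := Subgroup.card_mul_index C
      rw [hCcard, hcard, mul_comm 2 (r * s)] at h1
      exact Nat.eq_of_mul_eq_mul_left hrs0 h1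
    have hconjmem : ∀ (c g : G), g ∈ C → c * g * c⁻¹ ∈ C := by
      intro c g hg
      rw [Subgroup.mul_mem_iff_of_index_two hindex, Subgroup.mul_mem_iff_of_index_two hindex,
        Subgroup.inv_mem_iff]
      tauto
    have hyy : y * y ∈ C := Subgroup.mul_self_mem_of_index_two hindex y
    have hxmem : x ∈ C := Subgroup.mem_zpowers x
    have hyC : y ∈ C := by
      obtain ⟨o, hoodd, hoconj⟩ : ∃ o : ℕ, Odd o ∧ IsConj (x ^ o) (y ^ o) := by
        rcases Nat.even_or_odd s with he' | ho'
        · rcases Nat.even_or_odd r with he | ho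
          · exfalso
            have h2 : (2 : ℕ) ∣ Nat.gcd r s := Nat.dvd_gcd he.two_dvd he'.two_dvd
            omega
          · exact ⟨r, ho, hxr⟩
        · exact ⟨s, ho', hxs⟩
      obtain ⟨c, hc⟩ := isConj_iff.1 hoconj
      have hyo : y ^ o ∈ C := hc ▸ hconjmem c _ (pow_mem hxmem o)
      obtain ⟨kk, hkk⟩ := hoodd
      have h1 : (y * y) ^ kk = y ^ (2 * kk) := by rw [← sq, ← pow_mul]
      have h2 : y * (y * y) ^ kk = y ^ o := by rw [hkk, h1, ← pow_succ']
      have h3 : y = y ^ o * ((y * y) ^ kk)⁻¹ := by rw [← h2, mul_inv_cancel_right]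
      rw [h3]
      exact mul_mem hyo (inv_mem (pow_mem hyy kk))
    obtain ⟨t, ht⟩ : ∃ t : G, t ∉ C := by
      by_contra h
      push_neg at h
      have hCt : C = ⊤ := (Subgroup.eq_top_iff' C).mpr h
      rw [hCt, Subgroup.index_top] at hindex
      omega
    obtain ⟨j, hj⟩ := Subgroup.mem_zpowers_iff.mp (hconjmem t x hxmem)
    obtain ⟨i, hi⟩ := Subgroup.mem_zpowers_iff.mp hyC
    obtain ⟨w, hw⟩ := Subgroup.mem_zpowers_iff.mp (Subgroup.mul_self_mem_of_index_two hindex t)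
    have hxc : ∀ a b : ℤ, x ^ a * x ^ b = x ^ b * x ^ a := by
      intro a b; rw [← zpow_add, ← zpow_add, add_comm]
    have hjj : x ^ (j * j) = x ^ (1 : ℤ) := by
      have e1 : x ^ (j * j) = t * t * x * (t * t)⁻¹ := by
        calc x ^ (j * j) = (x ^ j) ^ j := zpow_mul x j j
        _ = (t * x * t⁻¹) ^ j := by rw [hj]
        _ = t * x ^ j * t⁻¹ := conj_zpow
        _ = t * (t * x * t⁻¹) * t⁻¹ := by rw [hj]
        _ = t * t * x * (t * t)⁻¹ := by group
      have e2 : t * t * x * (t * t)⁻¹ = x := by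
        rw [← hw]
        have h1 := hxc w 1
        rw [zpow_one] at h1
        rw [h1, mul_inv_cancel_right]
      rw [e1, e2, zpow_one]
    have hj2 : (m : ℤ) ∣ j * j - 1 := hdv (1 : ℤ) (j * j) hjj.symm
    have h2m : (2 : ℤ) ∣ (m : ℤ) := by
      obtain ⟨u, hu⟩ := heven
      have hmu : m = 2 * u := by omega
      exact ⟨(u : ℤ), by exact_mod_cast hmu⟩
    have hjodd : (2 : ℤ) ∣ j - 1 := by
      have h21 : (2 : ℤ) ∣ (j - 1) * (j + 1) := by
        have h22 := h2m.trans hj2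
        rwa [show j * j - 1 = (j - 1) * (j + 1) by ring] at h22
      rcases Int.prime_two.dvd_mul.mp h21 with h | h
      · exact h
      · obtain ⟨v, hv⟩ := h
        exact ⟨v - 1, by omega⟩
    have hchar : ∀ (a : ℤ) (c : G), c * x ^ a * c⁻¹ = x ^ a ∨ c * x ^ a * c⁻¹ = x ^ (j * a) := by
      intro a c
      by_cases hcC : c ∈ C
      · left
        obtain ⟨kk, hkk⟩ := Subgroup.mem_zpowers_iff.mp hcC
        rw [← hkk, hxc kk a, mul_inv_cancel_right]
      · right
        have hu : c * t⁻¹ ∈ C := by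
          rw [Subgroup.mul_mem_iff_of_index_two hindex, Subgroup.inv_mem_iff]
          tauto
        obtain ⟨kk, hkk⟩ := Subgroup.mem_zpowers_iff.mp hu
        have hc' : c = x ^ kk * t := by rw [hkk, inv_mul_cancel_right]
        have htxa : t * x ^ a * t⁻¹ = x ^ (j * a) := by
          rw [zpow_mul, hj, conj_zpow]
        rw [hc']
        calc x ^ kk * t * x ^ a * (x ^ kk * t)⁻¹
            = x ^ kk * (t * x ^ a * t⁻¹) * (x ^ kk)⁻¹ := by group
        _ = x ^ kk * x ^ (j * a) * (x ^ kk)⁻¹ := by rw [htxa]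
        _ = x ^ (j * a) := by rw [hxc kk (j * a), mul_inv_cancel_right]
    have hdisj : ∀ (r' : ℕ), IsConj (x ^ r') (y ^ r') →
        (m : ℤ) ∣ (i - 1) * r' ∨ (m : ℤ) ∣ (i - j) * r' := by
      intro r' hconj
      obtain ⟨c, hc⟩ := isConj_iff.1 hconj
      have hyr' : y ^ r' = x ^ (i * (r' : ℤ)) := by rw [← hi, zpow_mul, zpow_natCast]
      have hxr' : x ^ r' = x ^ ((r' : ℤ)) := (zpow_natCast x r').symm
      rw [hxr', hyr'] at hc
      rcases hchar ((r' : ℤ)) c with h | h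
      · left
        have hApp := hdv _ _ (h.symm.trans hc)
        rwa [show i * (r' : ℤ) - (r' : ℤ) = (i - 1) * r' by ring] at hApp
      · right
        have hApp := hdv _ _ (h.symm.trans hc)
        rwa [show i * (r' : ℤ) - j * (r' : ℤ) = (i - j) * r' by ring] at hApp
    have hmcs : (m : ℤ) = (s : ℤ) * r := by push_cast [hk]; ring
    have hmcr : (m : ℤ) = (r : ℤ) * s := by push_cast [hk]; ring
    have hds1 : (s : ℤ) ∣ i - 1 ∨ (s : ℤ) ∣ i - j := by
      rcases hdisj r hxr with h | h
      · left
        rw [hmcs] at h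
        exact (mul_dvd_mul_iff_right hrZ0).mp h
      · right
        rw [hmcs] at h
        exact (mul_dvd_mul_iff_right hrZ0).mp h
    have hdr1 : (r : ℤ) ∣ i - 1 ∨ (r : ℤ) ∣ i - j := by
      rcases hdisj s hxs with h | h
      · left
        rw [hmcr] at h
        exact (mul_dvd_mul_iff_right hsZ0).mp h
      · right
        rw [hmcr] at h
        exact (mul_dvd_mul_iff_right hsZ0).mp h
    have mkconj1 : ∀ d : ℕ, (m : ℤ) ∣ (i - 1) * d → IsConj (x ^ d) (y ^ d) := by
      intro d hd
      have h1 : y ^ d = x ^ d := by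
        rw [← hi]
        have h0 : x ^ (i * (d : ℤ)) = x ^ ((d : ℤ)) := by
          apply hdv2
          rwa [show (d : ℤ) - i * d = -((i - 1) * d) by ring, dvd_neg]
        calc (x ^ i) ^ d = x ^ (i * (d : ℤ)) := by rw [zpow_mul, zpow_natCast]
        _ = x ^ ((d : ℤ)) := h0
        _ = x ^ d := zpow_natCast x d
      rw [h1]
    have mkconj2 : ∀ d : ℕ, (m : ℤ) ∣ (i - j) * d → IsConj (x ^ d) (y ^ d) := by
      intro d hd
      have h1 : y ^ d = x ^ (j * (d : ℤ)) := by
        rw [← hi]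
        have h0 : x ^ (i * (d : ℤ)) = x ^ (j * (d : ℤ)) := by
          apply hdv2
          rwa [show j * (d : ℤ) - i * d = -((i - j) * d) by ring, dvd_neg]
        calc (x ^ i) ^ d = x ^ (i * (d : ℤ)) := by rw [zpow_mul, zpow_natCast]
        _ = x ^ (j * (d : ℤ)) := h0
      have h2 : x ^ (j * (d : ℤ)) = t * x ^ d * t⁻¹ := by
        rw [zpow_mul, hj, conj_zpow, zpow_natCast]
      exact isConj_iff.2 ⟨t, by rw [h1, h2]⟩
    have cop2 : ∀ u : ℕ, ¬ (2 : ℕ) ∣ u → IsCoprime (2 : ℤ) (u : ℤ) := by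
      intro u hu
      have hcu : Nat.Coprime 2 u := (Nat.Prime.coprime_iff_not_dvd Nat.prime_two).mpr hu
      exact_mod_cast Nat.isCoprime_iff_coprime.mpr hcu
    have h2rs' : (2 : ℕ) ∣ r ∨ (2 : ℕ) ∣ s := by
      rcases Nat.even_mul.mp heven with he | he
      · exact Or.inl he.two_dvd
      · exact Or.inr he.two_dvd
    rcases hds1 with hA | hA <;> rcases hdr1 with hB | hB
    · -- s ∣ i-1, r ∣ i-1
      have hmd : (m : ℤ) ∣ (i - 1) * ((1 : ℕ) : ℤ) := by
        push_cast
        rw [mul_one, hmcr]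
        exact hcoZ.mul_dvd hB hA
      exact hdr 1 Nat.one_pos (one_dvd r) hr (mkconj1 1 hmd)
    · -- case C : s ∣ i-1, r ∣ i-j
      rcases h2rs' with h2 | h2
      · have hns : ¬ (2 : ℕ) ∣ s := by
          intro h2'
          have hgg := Nat.dvd_gcd h2 h2'
          omega
        have h2rZ : (2 : ℤ) ∣ (r : ℤ) := by exact_mod_cast h2
        obtain ⟨d, hd2⟩ := h2
        have h2ij : (2 : ℤ) ∣ i - j := h2rZ.trans hB
        have h2i1 : (2 : ℤ) ∣ i - 1 := by
          obtain ⟨a, ha⟩ := h2ij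
          obtain ⟨b, hb⟩ := hjodd
          exact ⟨a + b, by linarith⟩
        have h2s_dvd : (2 * (s : ℤ)) ∣ i - 1 := (cop2 s hns).mul_dvd h2i1 hA
        have hmd : (m : ℤ) ∣ (i - 1) * (d : ℤ) := by
          have hmc : (m : ℤ) = 2 * (s : ℤ) * d := by push_cast [hk, hd2]; ring
          rw [hmc]
          exact mul_dvd_mul_right h2s_dvd (d : ℤ)
        exact hdr d (by omega) ⟨2, by omega⟩ (by omega) (mkconj1 d hmd)
      · have hnr : ¬ (2 : ℕ) ∣ r := by
          intro h2'
          have hgg := Nat.dvd_gcd h2' h2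
          omega
        have h2sZ : (2 : ℤ) ∣ (s : ℤ) := by exact_mod_cast h2
        obtain ⟨d, hd2⟩ := h2
        have h2i1 : (2 : ℤ) ∣ i - 1 := h2sZ.trans hA
        have h2ij : (2 : ℤ) ∣ i - j := by
          obtain ⟨a, ha⟩ := h2i1
          obtain ⟨b, hb⟩ := hjodd
          exact ⟨a - b, by linarith⟩
        have h2r_dvd : (2 * (r : ℤ)) ∣ i - j := (cop2 r hnr).mul_dvd h2ij hB
        have hmd : (m : ℤ) ∣ (i - j) * (d : ℤ) := by
          have hmc : (m : ℤ) = 2 * (r : ℤ) * d := by push_cast [hk, hd2]; ring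
          rw [hmc]
          exact mul_dvd_mul_right h2r_dvd (d : ℤ)
        exact hds d (by omega) ⟨2, by omega⟩ (by omega) (mkconj2 d hmd)
    · -- case D : s ∣ i-j, r ∣ i-1
      rcases h2rs' with h2 | h2
      · have hns : ¬ (2 : ℕ) ∣ s := by
          intro h2'
          have hgg := Nat.dvd_gcd h2 h2'
          omega
        have h2rZ : (2 : ℤ) ∣ (r : ℤ) := by exact_mod_cast h2
        obtain ⟨d, hd2⟩ := h2
        have h2i1 : (2 : ℤ) ∣ i - 1 := h2rZ.trans hB
        have h2ij : (2 : ℤ) ∣ i - j := by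
          obtain ⟨a, ha⟩ := h2i1
          obtain ⟨b, hb⟩ := hjodd
          exact ⟨a - b, by linarith⟩
        have h2s_dvd : (2 * (s : ℤ)) ∣ i - j := (cop2 s hns).mul_dvd h2ij hA
        have hmd : (m : ℤ) ∣ (i - j) * (d : ℤ) := by
          have hmc : (m : ℤ) = 2 * (s : ℤ) * d := by push_cast [hk, hd2]; ring
          rw [hmc]
          exact mul_dvd_mul_right h2s_dvd (d : ℤ)
        exact hdr d (by omega) ⟨2, by omega⟩ (by omega) (mkconj2 d hmd)
      · have hnr : ¬ (2 : ℕ) ∣ r := by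
          intro h2'
          have hgg := Nat.dvd_gcd h2' h2
          omega
        have h2sZ : (2 : ℤ) ∣ (s : ℤ) := by exact_mod_cast h2
        obtain ⟨d, hd2⟩ := h2
        have h2ij : (2 : ℤ) ∣ i - j := h2sZ.trans hA
        have h2i1 : (2 : ℤ) ∣ i - 1 := by
          obtain ⟨a, ha⟩ := h2ij
          obtain ⟨b, hb⟩ := hjodd
          exact ⟨a + b, by linarith⟩
        have h2r_dvd : (2 * (r : ℤ)) ∣ i - 1 := (cop2 r hnr).mul_dvd h2i1 hB
        have hmd : (m : ℤ) ∣ (i - 1) * (d : ℤ) := by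
          have hmc : (m : ℤ) = 2 * (r : ℤ) * d := by push_cast [hk, hd2]; ring
          rw [hmc]
          exact mul_dvd_mul_right h2r_dvd (d : ℤ)
        exact hds d (by omega) ⟨2, by omega⟩ (by omega) (mkconj1 d hmd)
    · -- s ∣ i-j, r ∣ i-j
      have hmd : (m : ℤ) ∣ (i - j) * ((1 : ℕ) : ℤ) := by
        push_cast
        rw [mul_one, hmcr]
        exact hcoZ.mul_dvd hB hA
      exact hdr 1 Nat.one_pos (one_dvd r) hr (mkconj2 1 hmd)
  · -- m = 2 * r * s : cyclic case
    rw [hk1] at hk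
    have htop : Subgroup.zpowers x = ⊤ := by
      apply Subgroup.eq_top_of_card_eq
      rw [Nat.card_zpowers, ← hm, hcard, hk]
      ring
    obtain ⟨i, hi⟩ := Subgroup.mem_zpowers_iff.mp (htop ▸ Subgroup.mem_top y)
    have heq : ∀ a b : ℤ, IsConj (x ^ a) (x ^ b) → (m : ℤ) ∣ b - a := by
      intro a b h
      obtain ⟨c, hc⟩ := isConj_iff.1 h
      obtain ⟨kk, hkk⟩ := Subgroup.mem_zpowers_iff.mp (htop ▸ Subgroup.mem_top c)
      have hcm : x ^ kk * x ^ a = x ^ a * x ^ kk := by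
        rw [← zpow_add, ← zpow_add, add_comm]
      rw [← hkk, hcm, mul_inv_cancel_right] at hc
      exact hdv a b hc
    have hy1 : ∀ (r' : ℕ), IsConj (x ^ r') (y ^ r') → (m : ℤ) ∣ (i - 1) * r' := by
      intro r' hconj
      have hyr' : y ^ r' = x ^ (i * (r' : ℤ)) := by
        rw [← hi, zpow_mul, zpow_natCast]
      have hxr' : x ^ r' = x ^ ((r' : ℤ)) := (zpow_natCast x r').symm
      rw [hxr', hyr'] at hconj
      have := heq _ _ hconj
      have e : i * (r' : ℤ) - (r' : ℤ) = (i - 1) * r' := by ring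
      rwa [e] at this
    have h2s : (2 * (s : ℤ)) ∣ i - 1 := by
      have := hy1 r hxr
      have hmcast : (m : ℤ) = 2 * (s : ℤ) * r := by push_cast [hk]; ring
      rw [hmcast] at this
      exact (mul_dvd_mul_iff_right hrZ0).mp this
    have h2r : (2 * (r : ℤ)) ∣ i - 1 := by
      have := hy1 s hxs
      have hmcast : (m : ℤ) = 2 * (r : ℤ) * s := by push_cast [hk]; ring
      rw [hmcast] at this
      exact (mul_dvd_mul_iff_right hsZ0).mp this
    obtain ⟨u, hu⟩ : (2 : ℤ) ∣ i - 1 := dvd_trans ⟨s, rfl⟩ h2s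
    have hsu : (s : ℤ) ∣ u := by
      rcases h2s with ⟨v, hv⟩
      have h2 : 2 * u = 2 * ((s : ℤ) * v) := by rw [← hu, hv]; ring
      exact ⟨v, by linarith⟩
    have hru : (r : ℤ) ∣ u := by
      rcases h2r with ⟨v, hv⟩
      have h2 : 2 * u = 2 * ((r : ℤ) * v) := by rw [← hu, hv]; ring
      exact ⟨v, by linarith⟩
    have hrsu : ((r : ℤ) * s) ∣ u := hcoZ.mul_dvd hru hsu
    have hmdvd : (m : ℤ) ∣ i - 1 := by
      obtain ⟨v, hv⟩ := hrsu
      refine ⟨v, ?_⟩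
      push_cast [hk]
      rw [hu, hv]
      ring
    have hxy : x = y := by
      have : x ^ (1 : ℤ) = x ^ i := hdv2 1 i hmdvd
      rw [zpow_one] at this
      rw [this, hi]
    exact hdr 1 Nat.one_pos (one_dvd r) hr (by rw [pow_one, pow_one, hxy])
end

section
/- Let Q be a quadratic form over a field K. If Q has a nontrivial zero over some field extension L of K of odd finite degree, then Q has a nontrivial zero over K. (Springer's theorem, valid in all characteristics including 2.) -/
open Polynomial

namespace SpringerAux

universe u v


lemma eval_map_comp {K A B : Type*} [CommSemiring K] [CommSemiring A] [CommSemiring B]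
    (φ : K →+* A) (σ : A →+* B) {m : ℕ} (Q : MvPolynomial (Fin m) K) (v : Fin m → A) :
    MvPolynomial.eval (fun i => σ (v i)) (MvPolynomial.map (σ.comp φ) Q)
      = σ (MvPolynomial.eval v (MvPolynomial.map φ Q)) := by
  rw [MvPolynomial.eval_map, MvPolynomial.eval_map, MvPolynomial.eval₂_comp_left]; rfl

lemma eval_mul_of_isHomogeneous {R : Type*} [CommSemiring R] {m n : ℕ}
    {Q : MvPolynomial (Fin m) R} (hQ : Q.IsHomogeneous n) (c : R) (v : Fin m → R) :
    MvPolynomial.eval (fun i => c * v i) Q = c ^ n * MvPolynomial.eval v Q := by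
  rw [MvPolynomial.eval_eq', MvPolynomial.eval_eq', Finset.mul_sum]
  refine Finset.sum_congr rfl fun d hd => ?_
  have hdeg : ∑ i, d i = n := by
    have := hQ (MvPolynomial.mem_support_iff.mp hd)
    simpa [Finsupp.weight, Finsupp.linearCombination, Finsupp.sum_fintype] using this
  rw [← hdeg]
  simp only [mul_pow]
  rw [Finset.prod_mul_distrib, Finset.prod_pow_eq_pow_sum]
  ring

lemma exists_odd_irreducible_factor {K : Type*} [Field K] (r : K[X]) (h0 : r ≠ 0)
    (hodd : Odd r.natDegree) : ∃ q : K[X], Irreducible q ∧ Odd q.natDegree ∧ q ∣ r := by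
  generalize hn : r.natDegree = n at hodd
  induction n using Nat.strong_induction_on generalizing r with
  | _ n ih =>
    subst hn
    have hru : ¬ IsUnit r := by
      intro hu
      rw [Polynomial.isUnit_iff] at hu
      obtain ⟨c, hc, rfl⟩ := hu
      simp at hodd
    obtain ⟨q, hq, hqd⟩ := WfDvdMonoid.exists_irreducible_factor hru h0
    by_cases hqodd : Odd q.natDegree
    · exact ⟨q, hq, hqodd, hqd⟩
    · obtain ⟨s, rfl⟩ := hqd
      have hs0 : s ≠ 0 := by rintro rfl; simp at h0
      have hq0 : q ≠ 0 := hq.ne_zero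
      have hdeg : (q * s).natDegree = q.natDegree + s.natDegree :=
        Polynomial.natDegree_mul hq0 hs0
      have hsodd : Odd s.natDegree := by
        rw [hdeg] at hodd
        rw [Nat.odd_iff] at hodd ⊢; rw [Nat.not_odd_iff] at hqodd
        omega
      have hqpos : 0 < q.natDegree := hq.natDegree_pos
      obtain ⟨t, ht1, ht2, ht3⟩ := ih s.natDegree (by omega) s hs0 rfl hsodd
      exact ⟨t, ht1, ht2, ht3.mul_left q⟩

lemma coeff_eval₂_top {K : Type*} [CommRing K] {m n : ℕ}
    {Q : MvPolynomial (Fin m) K} (hQ : Q.IsHomogeneous n) (h : Fin m → K[X]) (e : ℕ)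
    (he : ∀ i, (h i).natDegree ≤ e) :
    (MvPolynomial.eval₂ Polynomial.C h Q).coeff (n * e)
      = MvPolynomial.eval (fun i => (h i).coeff e) Q := by
  rw [MvPolynomial.eval₂_eq', MvPolynomial.eval_eq', Polynomial.finset_sum_coeff]
  refine Finset.sum_congr rfl fun d hd => ?_
  have hdeg : ∑ i, d i = n := by
    have := hQ (MvPolynomial.mem_support_iff.mp hd)
    simpa [Finsupp.weight, Finsupp.linearCombination, Finsupp.sum_fintype] using this
  rw [Polynomial.coeff_C_mul]
  congr 1
  have key : (∏ i, h i ^ d i) = ∏ x ∈ (Finset.univ.sigma fun i => Finset.range (d i)), h x.1 := by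
    rw [Finset.prod_sigma]
    simp [Finset.prod_const]
  have hcard : (Finset.univ.sigma fun i : Fin m => Finset.range (d i)).card = n := by
    rw [Finset.card_sigma]
    simpa using hdeg
  rw [key, ← hcard, Polynomial.coeff_prod_of_natDegree_le _ _ _ (fun p _ => he p.1)]
  rw [Finset.prod_sigma]
  simp [Finset.prod_const]

/-- the key step : descent along a simple extension `AdjoinRoot p`. -/
lemma core {K : Type*} [Field K] {m : ℕ} (Q : MvPolynomial (Fin m) K)
    (hQ : Q.IsHomogeneous 2) (p : K[X]) [hfact : Fact (Irreducible p)] (hmonic : p.Monic)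
    (hodd : Odd p.natDegree)
    (hz : ∃ w : Fin m → AdjoinRoot p, w ≠ 0 ∧
      MvPolynomial.eval w (MvPolynomial.map (algebraMap K (AdjoinRoot p)) Q) = 0) :
    (∃ v : Fin m → K, v ≠ 0 ∧ MvPolynomial.eval v Q = 0) ∨
    ∃ q : K[X], Irreducible q ∧ Odd q.natDegree ∧ q.natDegree < p.natDegree ∧
      ∃ w : Fin m → AdjoinRoot q, w ≠ 0 ∧
        MvPolynomial.eval w (MvPolynomial.map (algebraMap K (AdjoinRoot q)) Q) = 0 := by
  classical
  obtain ⟨w, hw0, hwz⟩ := hz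
  have hirr := hfact.out
  set d := p.natDegree with hd
  have hdpos : 0 < d := hirr.natDegree_pos
  have hp0 : p ≠ 0 := hirr.ne_zero
  -- m is positive
  rcases Nat.eq_zero_or_pos m with hm | hm
  · exfalso; apply hw0; subst hm; funext i; exact absurd i.2 (by omega)
  -- choose small representatives
  set f : Fin m → K[X] := fun i => AdjoinRoot.modByMonicHom hmonic (w i) with hf
  have hmkf : ∀ i, AdjoinRoot.mk p (f i) = w i := fun i => AdjoinRoot.mk_leftInverse hmonic (w i)
  have hfdeg : ∀ i, (f i).natDegree < d := by
    intro i
    obtain ⟨z, hzeq⟩ := AdjoinRoot.mk_surjective (w i)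
    have : f i = z %ₘ p := by rw [hf]; simp only [← hzeq, AdjoinRoot.modByMonicHom_mk]
    rw [this]
    exact Polynomial.natDegree_modByMonic_lt z hmonic hirr.ne_one
  obtain ⟨i₀, hi₀⟩ : ∃ i, w i ≠ 0 := by
    by_contra hall
    push_neg at hall
    exact hw0 (funext hall)
  have hfi₀ : f i₀ ≠ 0 := by
    intro h0
    apply hi₀; rw [← hmkf i₀, h0, map_zero]
  -- divide by the gcd
  set g : K[X] := Finset.gcd Finset.univ f with hg
  have hgdvd : ∀ i, g ∣ f i := fun i => Finset.gcd_dvd (Finset.mem_univ i)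
  have hg0 : g ≠ 0 := by
    intro h0
    exact hfi₀ (Finset.gcd_eq_zero_iff.mp h0 i₀ (Finset.mem_univ i₀))
  set h : Fin m → K[X] := fun i => f i / g with hh
  have hfgh : ∀ i, f i = g * h i := fun i =>
    (EuclideanDomain.mul_div_cancel' hg0 (hgdvd i)).symm
  have hgcd1 : Finset.gcd Finset.univ h = 1 :=
    Finset.gcd_div_eq_one (Finset.mem_univ i₀) hfi₀
  have hhdeg : ∀ i, (h i).natDegree ≤ d - 1 := by
    intro i
    by_cases h0 : f i = 0
    · have : h i = 0 := by rw [hh]; simp [h0]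
      simp [this]
    · have : (h i).natDegree ≤ (f i).natDegree :=
        Polynomial.natDegree_le_of_dvd ⟨g, by rw [mul_comm]; exact hfgh i⟩ h0
      have := hfdeg i
      omega
  -- the vector h is a zero over AdjoinRoot p
  have hmkg : AdjoinRoot.mk p g ≠ 0 := by
    rw [Ne, AdjoinRoot.mk_eq_zero]
    intro hdvd
    have := Polynomial.natDegree_le_of_dvd (dvd_trans hdvd (hgdvd i₀)) hfi₀
    have := hfdeg i₀
    omega
  have hwh : ∀ i, w i = AdjoinRoot.mk p g * AdjoinRoot.mk p (h i) := by
    intro i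
    rw [← map_mul, ← hfgh i, hmkf i]
  have hQmap : (MvPolynomial.map (algebraMap K (AdjoinRoot p)) Q).IsHomogeneous 2 :=
    hQ.map _
  have hzh : MvPolynomial.eval (fun i => AdjoinRoot.mk p (h i))
      (MvPolynomial.map (algebraMap K (AdjoinRoot p)) Q) = 0 := by
    have hwfun : w = fun i => AdjoinRoot.mk p g * AdjoinRoot.mk p (h i) := funext hwh
    rw [hwfun, eval_mul_of_isHomogeneous hQmap] at hwz
    rcases mul_eq_zero.mp hwz with h2 | h2
    · exact absurd (pow_eq_zero_iff (by norm_num) |>.mp h2) hmkg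
    · exact h2
  -- the composite polynomial
  set E : K[X] := MvPolynomial.eval₂ Polynomial.C h Q with hE
  have hmkE : ∀ (q : K[X]), (AdjoinRoot.mk q) E
      = MvPolynomial.eval (fun i => AdjoinRoot.mk q (h i))
          (MvPolynomial.map (algebraMap K (AdjoinRoot q)) Q) := by
    intro q
    rw [hE, MvPolynomial.eval_map, MvPolynomial.eval₂_comp_left, AdjoinRoot.algebraMap_eq]
    rfl
  have hpE : p ∣ E := by
    rw [← AdjoinRoot.mk_eq_zero, hmkE p, hzh]
  -- top coefficient
  set e : ℕ := Finset.univ.sup (fun i => (h i).natDegree) with he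
  have hhe : ∀ i, (h i).natDegree ≤ e := fun i =>
    Finset.le_sup (f := fun i => (h i).natDegree) (Finset.mem_univ i)
  set c : Fin m → K := fun i => (h i).coeff e with hc
  have hcE : E.coeff (2 * e) = MvPolynomial.eval c Q := coeff_eval₂_top hQ h e hhe
  -- c is nonzero
  have hhi₀ : h i₀ ≠ 0 := by
    intro h0
    apply hmkg
    exfalso
    exact hfi₀ (by rw [hfgh i₀, h0, mul_zero])
  have hcne : c ≠ 0 := by
    obtain ⟨i₁, -, hi₁⟩ := Finset.exists_mem_eq_sup Finset.univ
      ⟨i₀, Finset.mem_univ i₀⟩ (fun i => (h i).natDegree)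
    by_cases h0 : h i₁ = 0
    · have he0 : e = 0 := by rw [he, hi₁, h0, Polynomial.natDegree_zero]
      have hd0 : (h i₀).natDegree = 0 := le_antisymm (he0 ▸ hhe i₀) (Nat.zero_le _)
      intro hcz
      apply hhi₀
      have hz0 : (h i₀).coeff e = 0 := congrFun hcz i₀
      rw [he0] at hz0
      rw [Polynomial.eq_C_of_natDegree_eq_zero hd0, hz0, map_zero]
    · intro hcz
      have hz1 : (h i₁).coeff e = 0 := congrFun hcz i₁
      have hce : (h i₁).coeff (h i₁).natDegree = 0 := by rwa [he, hi₁] at hz1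
      exact h0 (Polynomial.leadingCoeff_eq_zero.mp hce)
  -- dichotomy
  by_cases hcQ : MvPolynomial.eval c Q = 0
  · exact Or.inl ⟨c, hcne, hcQ⟩
  · right
    have hE0 : E ≠ 0 := fun h0 => hcQ (by rw [← hcE, h0, Polynomial.coeff_zero])
    have hEup : E.natDegree ≤ 2 * e := by
      rw [hE, MvPolynomial.eval₂_eq']
      apply Polynomial.natDegree_sum_le_of_forall_le
      intro dd hdd
      refine le_trans (Polynomial.natDegree_C_mul_le _ _) ?_
      refine le_trans (Polynomial.natDegree_prod_le _ _) ?_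
      have hdeg2 : ∑ i, dd i = 2 := by
        have := hQ (MvPolynomial.mem_support_iff.mp hdd)
        simpa [Finsupp.weight, Finsupp.linearCombination, Finsupp.sum_fintype] using this
      calc ∑ i, ((h i) ^ dd i).natDegree ≤ ∑ i, dd i * e := by
            refine Finset.sum_le_sum fun i _ => ?_
            refine le_trans (Polynomial.natDegree_pow_le) ?_
            exact Nat.mul_le_mul_left _ (hhe i)
        _ = 2 * e := by rw [← Finset.sum_mul, hdeg2]
    have hElow : 2 * e ≤ E.natDegree :=
      Polynomial.le_natDegree_of_ne_zero (by rw [hcE]; exact hcQ)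
    have hEdeg : E.natDegree = 2 * e := le_antisymm hEup hElow
    obtain ⟨r, hr⟩ := hpE
    have hr0 : r ≠ 0 := by rintro rfl; rw [mul_zero] at hr; exact hE0 hr
    have hrdeg : d + r.natDegree = 2 * e := by
      rw [← hEdeg, hr, Polynomial.natDegree_mul hp0 hr0]
    have hrodd : Odd r.natDegree := by
      rw [Nat.odd_iff] at hodd ⊢
      omega
    obtain ⟨q, hq1, hq2, hq3⟩ := exists_odd_irreducible_factor r hr0 hrodd
    have hqr : q.natDegree ≤ r.natDegree := Polynomial.natDegree_le_of_dvd hq3 hr0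
    have hed : e ≤ d - 1 := Finset.sup_le fun i _ => hhdeg i
    have hqlt : q.natDegree < d := by omega
    refine ⟨q, hq1, hq2, hqlt, fun i => AdjoinRoot.mk q (h i), ?_, ?_⟩
    · intro h0
      have hdvd : ∀ i, q ∣ h i := by
        intro i
        rw [← AdjoinRoot.mk_eq_zero]
        exact congrFun h0 i
      have : q ∣ (1 : K[X]) := hgcd1 ▸ Finset.dvd_gcd fun i _ => hdvd i
      exact hq1.not_isUnit (isUnit_of_dvd_one this)
    · rw [← hmkE q, hr, map_mul, (AdjoinRoot.mk_eq_zero).mpr hq3, mul_zero]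





section helpers
lemma eval_map_comp' {K A B : Type*} [CommSemiring K] [CommSemiring A] [CommSemiring B]
    (φ : K →+* A) (σ : A →+* B) {m : ℕ} (Q : MvPolynomial (Fin m) K) (v : Fin m → A) :
    MvPolynomial.eval (fun i => σ (v i)) (MvPolynomial.map (σ.comp φ) Q)
      = σ (MvPolynomial.eval v (MvPolynomial.map φ Q)) := by
  rw [MvPolynomial.eval_map, MvPolynomial.eval_map, MvPolynomial.eval₂_comp_left]; rfl

lemma algebraMap_surjective_of_finrank_one {K L : Type*} [Field K] [Field L] [Algebra K L]
    (h : Module.finrank K L = 1) : Function.Surjective (algebraMap K L) := by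
  have hbt := Subalgebra.bot_eq_top_of_finrank_eq_one h
  intro x
  have hx : x ∈ (⊥ : Subalgebra K L) := hbt ▸ trivial
  rwa [Algebra.mem_bot] at hx

lemma descend_of_surjective {K L : Type*} [Field K] [Field L] (φ : K →+* L)
    (hs : Function.Surjective φ) {m : ℕ} (Q : MvPolynomial (Fin m) K) (v : Fin m → L)
    (hv0 : v ≠ 0) (hvz : MvPolynomial.eval v (MvPolynomial.map φ Q) = 0) :
    ∃ u : Fin m → K, u ≠ 0 ∧ MvPolynomial.eval u Q = 0 := by
  choose u hu using fun i => hs (v i)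
  refine ⟨u, ?_, ?_⟩
  · intro h0
    apply hv0
    funext i
    rw [← hu i, congrFun h0 i, Pi.zero_apply, map_zero, Pi.zero_apply]
  · have h1 := eval_map_comp' (RingHom.id K) φ Q u
    rw [MvPolynomial.map_id] at h1
    have h2 : (fun i => φ (u i)) = v := funext hu
    rw [h2, RingHom.comp_id, hvz] at h1
    exact φ.injective (by rw [← h1, map_zero])
end helpers



open IntermediateField in
lemma aux (n : ℕ) : ∀ (K L : Type u) [Field K] [Field L] [Algebra K L]
    [FiniteDimensional K L], Module.finrank K L = n → Odd n →
    ∀ (m : ℕ) (Q : MvPolynomial (Fin m) K), Q.IsHomogeneous 2 →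
    (∃ v : Fin m → L, v ≠ 0 ∧
      MvPolynomial.eval v (MvPolynomial.map (algebraMap K L) Q) = 0) →
    ∃ v : Fin m → K, v ≠ 0 ∧ MvPolynomial.eval v Q = 0 := by
  induction n using Nat.strong_induction_on with
  | _ n ih =>
  intro K L _ _ _ _ hrank hodd m Q hQ hz
  obtain ⟨v, hv0, hvz⟩ := hz
  have hn1 : 1 ≤ n := by
    rcases Nat.eq_zero_or_pos n with h | h
    · subst h; simp [Nat.odd_iff] at hodd
    · exact h
  rcases eq_or_lt_of_le hn1 with hn | hn
  · -- base case n = 1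
    exact descend_of_surjective _ (algebraMap_surjective_of_finrank_one (by omega)) Q v hv0 hvz
  · -- inductive step
    obtain ⟨θ, hθ⟩ : ∃ θ : L, θ ∉ Set.range (algebraMap K L) := by
      by_contra hall
      push_neg at hall
      have hsurj : Function.Surjective (algebraMap K L) := fun x => hall x
      have e := LinearEquiv.ofBijective (Algebra.linearMap K L)
        ⟨(algebraMap K L).injective, hsurj⟩
      have h1 : Module.finrank K L = 1 := by
        rw [← e.finrank_eq, Module.finrank_self]
      omega
    have hint : IsIntegral K θ := IsIntegral.of_finite K θ
    have hdF : Module.finrank K K⟮θ⟯ * Module.finrank K⟮θ⟯ L = n := by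
      rw [Module.finrank_mul_finrank, hrank]
    have hoddb : Odd (Module.finrank K K⟮θ⟯) ∧ Odd (Module.finrank K⟮θ⟯ L) :=
      Nat.odd_mul.mp (hdF ▸ hodd)
    have hd1 : 1 < Module.finrank K K⟮θ⟯ := by
      rcases Nat.lt_or_ge 1 (Module.finrank K K⟮θ⟯) with h | h
      · exact h
      · exfalso
        have hpos : 0 < Module.finrank K K⟮θ⟯ := Module.finrank_pos
        have h1 : Module.finrank K K⟮θ⟯ = 1 := by omega
        obtain ⟨x, hx⟩ := algebraMap_surjective_of_finrank_one h1
          (IntermediateField.AdjoinSimple.gen K θ)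
        apply hθ
        refine ⟨x, ?_⟩
        rw [IsScalarTower.algebraMap_apply K K⟮θ⟯ L, hx,
          IntermediateField.AdjoinSimple.algebraMap_gen]
    have hflpos : 0 < Module.finrank K⟮θ⟯ L := Module.finrank_pos
    have hfllt : Module.finrank K⟮θ⟯ L < n := by
      rw [← hdF]
      exact (Nat.lt_mul_iff_one_lt_left hflpos).mpr hd1
    -- step 1 : descend from L to K⟮θ⟯
    have hvz' : MvPolynomial.eval v (MvPolynomial.map (algebraMap K⟮θ⟯ L)
        (MvPolynomial.map (algebraMap K K⟮θ⟯) Q)) = 0 := by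
      rw [MvPolynomial.map_map, ← IsScalarTower.algebraMap_eq]
      exact hvz
    obtain ⟨w, hw0, hwz⟩ := ih (Module.finrank K⟮θ⟯ L) hfllt K⟮θ⟯ L rfl hoddb.2 m
      (MvPolynomial.map (algebraMap K K⟮θ⟯) Q) (hQ.map _) ⟨v, hv0, hvz'⟩
    -- step 2 : move to AdjoinRoot (minpoly K θ)
    set p := minpoly K θ with hp
    haveI : Fact (Irreducible p) := ⟨minpoly.irreducible hint⟩
    have hdeq : Module.finrank K K⟮θ⟯ = p.natDegree := IntermediateField.adjoin.finrank hint
    set σ := IntermediateField.adjoinRootEquivAdjoin K hint with hσ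
    set w' : Fin m → AdjoinRoot p := fun i => σ.symm (w i) with hw'
    have hw'0 : w' ≠ 0 := by
      intro h0
      apply hw0
      funext i
      have h1 : σ.symm (w i) = 0 := congrFun h0 i
      have := congrArg σ h1
      rwa [AlgEquiv.apply_symm_apply, map_zero] at this
    have hw'z : MvPolynomial.eval w' (MvPolynomial.map (algebraMap K (AdjoinRoot p)) Q) = 0 := by
      set τ : K⟮θ⟯ →+* AdjoinRoot p := ((σ.symm : K⟮θ⟯ →ₐ[K] AdjoinRoot p) : K⟮θ⟯ →+* AdjoinRoot p) with hτdef
      have hτ : τ.comp (algebraMap K K⟮θ⟯) = algebraMap K (AdjoinRoot p) :=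
        AlgHom.comp_algebraMap (σ.symm : K⟮θ⟯ →ₐ[K] AdjoinRoot p)
      have h1 := eval_map_comp' (algebraMap K K⟮θ⟯) τ Q w
      rw [hτ] at h1
      have hww : w' = fun i => τ (w i) := by
        funext i; rfl
      rw [hww, h1, hwz, map_zero]
    rcases core Q hQ p (minpoly.monic hint) (hdeq ▸ hoddb.1) ⟨w', hw'0, hw'z⟩ with
      hleft | ⟨q, hq1, hq2, hq3, w'', hw''0, hw''z⟩
    · exact hleft
    · haveI := Fact.mk hq1
      haveI : FiniteDimensional K (AdjoinRoot q) :=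
        Module.Finite.of_basis (AdjoinRoot.powerBasis hq1.ne_zero).basis
      have hfr : Module.finrank K (AdjoinRoot q) = q.natDegree :=
        (AdjoinRoot.powerBasis hq1.ne_zero).finrank
      have hdn : p.natDegree ≤ n := by
        rw [← hdeq] at *
        calc Module.finrank K K⟮θ⟯ ≤ Module.finrank K K⟮θ⟯ * Module.finrank K⟮θ⟯ L :=
              Nat.le_mul_of_pos_right _ hflpos
          _ = n := hdF
      exact ih q.natDegree (by omega) K (AdjoinRoot q) hfr hq2 m Q hQ ⟨w'', hw''0, hw''z⟩

theorem stmt6' {K : Type u} {L : Type v} [Field K] [Field L] [Algebra K L]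
    [FiniteDimensional K L] (hodd : Odd (Module.finrank K L))
    (m : ℕ) (Q : MvPolynomial (Fin m) K) (hQ : Q.IsHomogeneous 2)
    (hL : ∃ v : Fin m → L, v ≠ 0 ∧
      MvPolynomial.eval v (MvPolynomial.map (algebraMap K L) Q) = 0) :
    ∃ v : Fin m → K, v ≠ 0 ∧ MvPolynomial.eval v Q = 0 := by
  obtain ⟨v, hv0, hvz⟩ := hL
  let eK : ULift.{v} K ≃+* K := ULift.ringEquiv
  let eL : ULift.{u} L ≃+* L := ULift.ringEquiv
  letI : Algebra (ULift.{v} K) (ULift.{u} L) :=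
    { toSMul := inferInstance
      algebraMap := eL.symm.toRingHom.comp ((algebraMap K L).comp eK.toRingHom)
      commutes' := fun r x => ULift.down_injective <| by
        exact Algebra.commutes r.down x.down
      smul_def' := fun r x => ULift.down_injective <| by
        exact Algebra.smul_def r.down x.down }
  have halg : algebraMap (ULift.{v} K) (ULift.{u} L)
      = eL.symm.toRingHom.comp ((algebraMap K L).comp eK.toRingHom) := rfl
  have hc : (algebraMap K L).comp eK.toRingHom
      = eL.toRingHom.comp (algebraMap (ULift.{v} K) (ULift.{u} L)) := by
    ext x
    rw [halg]
    simp
  have hrank := Algebra.lift_rank_eq_of_equiv_equiv eK eL hc.symm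
  haveI : FiniteDimensional (ULift.{v} K) (ULift.{u} L) := by
    have h2 : Module.rank (ULift.{v} K) (ULift.{u} L) < Cardinal.aleph0 := by
      rw [← Cardinal.lift_lt_aleph0, hrank, Cardinal.lift_lt_aleph0]
      exact Module.rank_lt_aleph0 K L
    exact Module.rank_lt_aleph0_iff.mp h2
  have hfrank : Module.finrank (ULift.{v} K) (ULift.{u} L) = Module.finrank K L := by
    have := congrArg Cardinal.toNat hrank
    rwa [Cardinal.toNat_lift, Cardinal.toNat_lift] at this
  set τK : K →+* ULift.{v} K := eK.symm.toRingHom with hτK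
  set τL : L →+* ULift.{u} L := eL.symm.toRingHom with hτL
  set Q' : MvPolynomial (Fin m) (ULift.{v} K) := MvPolynomial.map τK Q with hQ'
  have hQ'h : Q'.IsHomogeneous 2 := hQ.map _
  have hcomp : τL.comp (algebraMap K L)
      = (algebraMap (ULift.{v} K) (ULift.{u} L)).comp τK := by
    ext x
    rw [halg]
    simp [τL, τK]
  have hv'z : MvPolynomial.eval (fun i => τL (v i))
      (MvPolynomial.map (algebraMap (ULift.{v} K) (ULift.{u} L)) Q') = 0 := by
    have h1 := eval_map_comp' (algebraMap K L) τL Q v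
    rw [hcomp, ← MvPolynomial.map_map, ← hQ'] at h1
    rw [h1, hvz, map_zero]
  have hv'0 : (fun i => τL (v i)) ≠ 0 := by
    intro h0
    apply hv0
    funext i
    have h1 : τL (v i) = 0 := congrFun h0 i
    have h2 := congrArg eL h1
    rwa [map_zero] at h2
  obtain ⟨u', hu'0, hu'z⟩ := aux (Module.finrank K L) (ULift.{v} K) (ULift.{u} L)
    hfrank hodd m Q' hQ'h ⟨fun i => τL (v i), hv'0, hv'z⟩
  set τK' : ULift.{v} K →+* K := eK.toRingHom with hτK'
  refine ⟨fun i => τK' (u' i), ?_, ?_⟩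
  · intro h0
    apply hu'0
    funext i
    have h1 : τK' (u' i) = 0 := congrFun h0 i
    have h2 := congrArg eK.symm h1
    rwa [map_zero] at h2
  · have h1 := eval_map_comp' τK τK' Q u'
    have h2 : τK'.comp τK = RingHom.id K := by
      ext x; simp [τK, τK']
    rw [h2, MvPolynomial.map_id, ← hQ'] at h1
    rw [h1, hu'z, map_zero]


end SpringerAux

/-- Springer's theorem: a quadratic form (here, a homogeneous polynomial of
degree 2) with a nontrivial zero over an odd-degree field extension has a
nontrivial zero over the base field. Valid in all characteristics. -/
theorem stmt_6 {K L : Type*} [Field K] [Field L] [Algebra K L]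
    [FiniteDimensional K L] (hodd : Odd (Module.finrank K L))
    (m : ℕ) (Q : MvPolynomial (Fin m) K) (hQ : Q.IsHomogeneous 2)
    (hL : ∃ v : Fin m → L, v ≠ 0 ∧
      MvPolynomial.eval v (MvPolynomial.map (algebraMap K L) Q) = 0) :
    ∃ v : Fin m → K, v ≠ 0 ∧ MvPolynomial.eval v Q = 0 :=
  SpringerAux.stmt6' hodd m Q hQ hL
end

section
/- Let m > 2 be an integer, let K be a field whose characteristic does not divide m and which contains the m-th roots of unity. Suppose a in K* is not an m-th power in K, and let b be a nonzero element of K. Then any K-rational automorphism ψ of the projective line that maps the set of roots (in the algebraic closure of K) of x^m - a to the set of roots of x^m - b is of the form x ↦ cx or x ↦ c/x for some nonzero c in K. -/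
open Polynomial

/-- A `K`-rational automorphism of `ℙ¹` (given by a fractional linear
transformation with coefficients `r s t u ∈ K`, `r*u - s*t ≠ 0`) taking the
set of roots of `x^m - a` (in the algebraic closure) to the set of roots of
`x^m - b` must be of the form `x ↦ c x` or `x ↦ c / x`. -/
theorem stmt_10 {K : Type*} [Field K] (m : ℕ) (hm : 2 < m)
    (hchar : (m : K) ≠ 0)
    (hroots : Splits (X ^ m - 1 : K[X]))
    (a : K) (ha0 : a ≠ 0) (ha : ¬ ∃ c : K, c ^ m = a)
    (b : K) (hb : b ≠ 0)
    (r s t u : K) (hdet : r * u - s * t ≠ 0)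
    (hψ : ∀ α : AlgebraicClosure K, α ^ m = algebraMap K _ a →
      (algebraMap K _ t * α + algebraMap K _ u ≠ 0 ∧
        ∃ β : AlgebraicClosure K, β ^ m = algebraMap K _ b ∧
          algebraMap K _ r * α + algebraMap K _ s =
            β * (algebraMap K _ t * α + algebraMap K _ u))) :
    (s = 0 ∧ t = 0) ∨ (r = 0 ∧ u = 0) := by
  classical
  have hm0 : m ≠ 0 := by omega
  set f := algebraMap K (AlgebraicClosure K) with hf
  have hfinj : Function.Injective f := f.injective
  -- a root α of x^m - a in the closure
  obtain ⟨α, hαm⟩ := IsAlgClosed.exists_pow_nat_eq (f a) (Nat.pos_of_ne_zero hm0)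
  have ha0' : f a ≠ 0 := fun h => ha0 (hfinj (by rw [h, map_zero]))
  have hα0 : α ≠ 0 := by
    rintro rfl
    rw [zero_pow hm0] at hαm
    exact ha0' hαm.symm
  have hαK : ∀ c : K, f c ≠ α := by
    intro c hc
    exact ha ⟨c, hfinj (by rw [map_pow, hc, hαm])⟩
  -- the polynomial x^m - 1 over K
  have hpoly : (X ^ m - 1 : K[X]) = X ^ m - C 1 := by rw [C_1]
  have hP0 : (X ^ m - C (1:K)) ≠ 0 := by
    intro h
    have h2 := natDegree_X_pow_sub_C (n := m) (r := (1:K))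
    rw [h] at h2
    simp at h2
    omega
  have hroots' : Splits (X ^ m - C (1:K)) := by rwa [hpoly] at hroots
  have hmemroots : ∀ x : K, x ∈ (X ^ m - C (1:K)).roots ↔ x ^ m = 1 := by
    intro x
    rw [mem_roots hP0]
    simp [IsRoot, sub_eq_zero]
  have hcard : (X ^ m - C (1:K)).roots.card = m := by
    rw [splits_iff_card_roots.mp hroots', natDegree_X_pow_sub_C]
  have hnodup : (X ^ m - C (1:K)).roots.Nodup :=
    nodup_roots (separable_X_pow_sub_C (1:K) hchar one_ne_zero)
  -- two distinct m-th roots of unity, both ≠ 1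
  obtain ⟨η₁, hη₁T, η₂, hη₂T, hη12⟩ : ∃ x ∈ ((X ^ m - C (1:K)).roots.toFinset.erase 1),
      ∃ y ∈ ((X ^ m - C (1:K)).roots.toFinset.erase 1), x ≠ y := by
    apply Finset.one_lt_card.mp
    have h1 : (X ^ m - C (1:K)).roots.toFinset.card = m := by
      rw [Multiset.toFinset_card_of_nodup hnodup, hcard]
    have h2 := Finset.pred_card_le_card_erase
      (s := (X ^ m - C (1:K)).roots.toFinset) (a := (1:K))
    omega
  obtain ⟨hη₁ne1, hη₁mem⟩ := Finset.mem_erase.mp hη₁T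
  obtain ⟨hη₂ne1, hη₂mem⟩ := Finset.mem_erase.mp hη₂T
  have hη₁ : η₁ ^ m = 1 := (hmemroots η₁).mp (Multiset.mem_toFinset.mp hη₁mem)
  have hη₂ : η₂ ^ m = 1 := (hmemroots η₂).mp (Multiset.mem_toFinset.mp hη₂mem)
  have hη₁0 : η₁ ≠ 0 := by
    rintro rfl; rw [zero_pow hm0] at hη₁; exact zero_ne_one hη₁
  -- the key relation: for each m-th root of unity η there is an m-th root of
  -- unity χ (the ratio ψ(ηα)/ψ(α), which lies in K) giving a quadratic
  -- relation in α with coefficients in K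
  have hrel : ∀ η : K, η ^ m = 1 → ∃ χ : K, χ ^ m = 1 ∧
      f (r*t*η - χ*(r*t*η)) * α^2 + f (r*u*η + s*t - χ*(s*t*η + r*u)) * α
        + f (s*u - χ*(s*u)) = 0 := by
    intro η hη
    obtain ⟨ht1, β, hβm, hβ⟩ := hψ α hαm
    obtain ⟨ht2, β', hβ'm, hβ'⟩ := hψ (f η * α) (by
      rw [mul_pow, ← map_pow, hη, map_one, one_mul, hαm])
    have hb' : f b ≠ 0 := fun h => hb (hfinj (by rw [h, map_zero]))
    have hβ0 : β ≠ 0 := by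
      rintro rfl; rw [zero_pow hm0] at hβm; exact hb' hβm.symm
    have hχc : (β' * β⁻¹) ^ m = 1 := by
      rw [mul_pow, hβ'm, inv_pow, hβm]
      field_simp
    obtain ⟨χ, hχroot, hχ⟩ : ∃ χ ∈ (X ^ m - C (1:K)).roots, f χ = β' * β⁻¹ := by
      have hmem : β' * β⁻¹ ∈ ((X ^ m - C (1:K)).map f).roots := by
        rw [mem_roots (Polynomial.map_ne_zero hP0)]
        simp [IsRoot, hχc]
      rw [hroots'.roots_map f] at hmem
      exact Multiset.mem_map.mp hmem
    have hχm : χ ^ m = 1 := (hmemroots χ).mp hχroot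
    refine ⟨χ, hχm, ?_⟩
    have key : (f r * (f η * α) + f s) * (f t * α + f u)
        = f χ * ((f t * (f η * α) + f u) * (f r * α + f s)) := by
      rw [hβ', hβ, hχ]
      field_simp
    simp only [map_sub, map_add, map_mul]
    linear_combination key
  -- 1 and α are linearly independent over K
  have indep2 : ∀ c₁ c₀ : K, f c₁ * α + f c₀ = 0 → c₁ = 0 ∧ c₀ = 0 := by
    intro c₁ c₀ h
    by_cases hc : c₁ = 0
    · subst hc
      simp only [map_zero, zero_mul, zero_add] at h
      exact ⟨rfl, hfinj (by rw [h, map_zero])⟩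
    · exfalso
      apply hαK (-c₀ / c₁)
      have hc' : f c₁ ≠ 0 := fun h' => hc (hfinj (by rw [h', map_zero]))
      rw [map_div₀, map_neg]
      field_simp
      linear_combination -h
  -- conclusion from rt = 0 and su = 0
  have final : r * t = 0 → s * u = 0 → (s = 0 ∧ t = 0) ∨ (r = 0 ∧ u = 0) := by
    intro hrt hsu
    rcases mul_eq_zero.mp hrt with hr | ht
    · right
      refine ⟨hr, ?_⟩
      have hs : s ≠ 0 := by rintro rfl; apply hdet; rw [hr]; ring
      rcases mul_eq_zero.mp hsu with h | h
      · exact absurd h hs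
      · exact h
    · left
      refine ⟨?_, ht⟩
      have hu : u ≠ 0 := by rintro rfl; apply hdet; rw [ht]; ring
      rcases mul_eq_zero.mp hsu with h | h
      · exact h
      · exact absurd h hu
  by_cases hB : ∃ lam mu : K, α ^ 2 = f lam * α + f mu
  · -- α satisfies a quadratic relation over K
    obtain ⟨lam, mu, hquad⟩ := hB
    have hmu : mu ≠ 0 := by
      rintro rfl
      simp only [map_zero, add_zero] at hquad
      apply hαK lam
      have h2 : α * α = f lam * α := by rw [← pow_two]; exact hquad
      exact (mul_right_cancel₀ hα0 h2).symm
    have step : ∀ η : K, η ^ m = 1 → η ≠ 1 → r*t*η*mu + s*u = 0 := by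
      intro η hη hηne
      obtain ⟨χ, hχm, heq⟩ := hrel η hη
      rw [hquad] at heq
      have heq2 : f ((r*t*η - χ*(r*t*η))*lam + (r*u*η + s*t - χ*(s*t*η + r*u))) * α
          + f ((r*t*η - χ*(r*t*η))*mu + (s*u - χ*(s*u))) = 0 := by
        simp only [map_add, map_mul, map_sub] at heq ⊢
        linear_combination heq
      obtain ⟨h1, h0⟩ := indep2 _ _ heq2
      have hχ1 : χ ≠ 1 := by
        rintro rfl
        apply mul_ne_zero hdet (sub_ne_zero.mpr hηne)
        linear_combination h1
      have h0' : (1 - χ) * (r*t*η*mu + s*u) = 0 := by linear_combination h0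
      rcases mul_eq_zero.mp h0' with h | h
      · exact absurd (by linear_combination -h) hχ1
      · exact h
    have e1 := step η₁ hη₁ hη₁ne1
    have e2 := step η₂ hη₂ hη₂ne1
    have hrt : r * t = 0 := by
      have h : r*t*mu*(η₁ - η₂) = 0 := by linear_combination e1 - e2
      rcases mul_eq_zero.mp h with h' | h'
      · rcases mul_eq_zero.mp h' with h'' | h''
        · exact h''
        · exact absurd h'' hmu
      · exact absurd (sub_eq_zero.mp h') hη12
    have hsu : s * u = 0 := by linear_combination e1 - η₁ * mu * hrt
    exact final hrt hsu
  · -- 1, α, α² are linearly independent over K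
    have indep3 : ∀ c₂ c₁ c₀ : K, f c₂ * α^2 + f c₁ * α + f c₀ = 0 →
        c₂ = 0 ∧ c₁ = 0 ∧ c₀ = 0 := by
      intro c₂ c₁ c₀ h
      by_cases hc₂ : c₂ = 0
      · subst hc₂
        simp only [map_zero, zero_mul, zero_add] at h
        obtain ⟨h1, h0⟩ := indep2 _ _ h
        exact ⟨rfl, h1, h0⟩
      · exfalso
        apply hB
        refine ⟨-c₁/c₂, -c₀/c₂, ?_⟩
        have hc' : f c₂ ≠ 0 := fun h' => hc₂ (hfinj (by rw [h', map_zero]))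
        have e1 : f c₂ * f (-c₁/c₂) = f (-c₁) := by rw [← map_mul]; congr 1; field_simp
        have e2 : f c₂ * f (-c₀/c₂) = f (-c₀) := by rw [← map_mul]; congr 1; field_simp
        apply mul_left_cancel₀ hc'
        rw [mul_add, ← mul_assoc, e1, e2, map_neg, map_neg]
        linear_combination h
    obtain ⟨χ, hχm, heq⟩ := hrel η₁ hη₁
    obtain ⟨h2, h1, h0⟩ := indep3 _ _ _ heq
    have hχ1 : χ ≠ 1 := by
      rintro rfl
      apply mul_ne_zero hdet (sub_ne_zero.mpr hη₁ne1)
      linear_combination h1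
    have hrt : r * t = 0 := by
      have h : r*t*(η₁*(1-χ)) = 0 := by linear_combination h2
      rcases mul_eq_zero.mp h with h' | h'
      · exact h'
      · rcases mul_eq_zero.mp h' with h'' | h''
        · exact absurd h'' hη₁0
        · exact absurd (by linear_combination -h'') hχ1
    have hsu : s * u = 0 := by
      have h : s*u*(1-χ) = 0 := by linear_combination h0
      rcases mul_eq_zero.mp h with h' | h'
      · exact h'
      · exact absurd (by linear_combination -h') hχ1
    exact final hrt hsu
end

section
/- Let r > 1 and s > 1 be coprime integers with r odd. In the dihedral group D of order 4rs generated by u of order 2rs and v of order 2 with vuv = u^{-1}, let m be an integer with m ≡ 1 (mod r) and m ≡ -1 (mod 2s), and set x = u and y = u^m. Then for every positive integer i: x^i is conjugate to y^i in D if and only if r divides i or s divides i. -/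
open DihedralGroup

lemma r_inv {n : ℕ} (a : ZMod n) : (DihedralGroup.r a)⁻¹ = DihedralGroup.r (-a) := by
  rw [eq_comm, eq_inv_iff_mul_eq_one, r_mul_r, neg_add_cancel, one_def]

lemma sr_inv {n : ℕ} (a : ZMod n) : (DihedralGroup.sr a)⁻¹ = DihedralGroup.sr a := by
  rw [eq_comm, eq_inv_iff_mul_eq_one, sr_mul_self]

lemma isConj_r_iff {n : ℕ} (a b : ZMod n) :
    IsConj (DihedralGroup.r a) (DihedralGroup.r b) ↔ b = a ∨ b = -a := by
  rw [isConj_iff]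
  constructor
  · rintro ⟨(c | c), hc⟩
    · left
      rw [r_inv, r_mul_r, r_mul_r] at hc
      have := DihedralGroup.r.injEq .. ▸ hc
      simpa using this.symm
    · right
      rw [sr_inv, sr_mul_r, sr_mul_sr] at hc
      have := DihedralGroup.r.injEq .. ▸ hc
      rw [← this]; ring
  · rintro (rfl | rfl)
    · exact ⟨1, by group⟩
    · exact ⟨DihedralGroup.sr 0, by rw [sr_inv, sr_mul_r, sr_mul_sr]; ring_nf⟩

lemma r_pow {n : ℕ} (a : ZMod n) (k : ℕ) : (DihedralGroup.r a) ^ k = DihedralGroup.r ((k : ZMod n) * a) := by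
  induction k with
  | zero => simp
  | succ k ih => rw [pow_succ, ih, r_mul_r]; push_cast; ring_nf

/-- In the dihedral group of order `4rs` (with `r, s` coprime, `r` odd), with
`x = u` and `y = u^m` where `m ≡ 1 (mod r)` and `m ≡ -1 (mod 2s)`, the powers
`x^i` and `y^i` are conjugate iff `r ∣ i` or `s ∣ i`. -/
theorem stmt_12 (r s : ℕ) (hr : 1 < r) (hs : 1 < s) (hrs : Nat.Coprime r s)
    (hrodd : Odd r) (m : ℤ) (hm1 : (m : ZMod r) = 1) (hm2 : (m : ZMod (2 * s)) = -1)
    (i : ℕ) (hi : 0 < i) :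
    IsConj ((DihedralGroup.r 1 : DihedralGroup (2 * r * s)) ^ i)
      ((DihedralGroup.r (m : ZMod (2 * r * s))) ^ i) ↔ r ∣ i ∨ s ∣ i := by
  have hdr : (r : ℤ) ∣ m - 1 := by
    have := (ZMod.intCast_zmod_eq_zero_iff_dvd (m - 1) r).mp (by push_cast [hm1]; ring)
    exact this
  have hds : ((2 * s : ℕ) : ℤ) ∣ m + 1 := by
    have := (ZMod.intCast_zmod_eq_zero_iff_dvd (m + 1) (2 * s)).mp (by push_cast [hm2]; ring)
    exact this
  have hcop : IsCoprime (r : ℤ) ((2 * s : ℕ) : ℤ) := by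
    push_cast
    refine IsCoprime.mul_right ?_ ?_
    · rw [Int.isCoprime_iff_gcd_eq_one, Int.gcd]
      simpa using Nat.Coprime.symm (Nat.coprime_two_left.mpr hrodd)
    · exact Int.isCoprime_iff_gcd_eq_one.mpr (by simpa [Int.gcd] using hrs)
  rw [_root_.r_pow, _root_.r_pow, isConj_r_iff]
  have key : ∀ a b : ℤ, ((a : ZMod (2*r*s)) = b) ↔ ((2*r*s : ℕ) : ℤ) ∣ a - b := by
    intro a b
    rw [← sub_eq_zero, ← Int.cast_sub, ZMod.intCast_zmod_eq_zero_iff_dvd]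
  have h1 : ((i : ZMod (2*r*s)) * (m : ZMod (2*r*s)) = (i : ZMod (2*r*s)) * 1) ↔ (s : ℤ) ∣ i := by
    rw [show ((i : ZMod (2*r*s)) * 1 : ZMod (2*r*s)) = ((i * 1 : ℤ) : ZMod (2*r*s)) by push_cast; ring,
        show ((i : ZMod (2*r*s)) * (m : ZMod (2*r*s)) : ZMod (2*r*s)) = ((i * m : ℤ) : ZMod (2*r*s)) by push_cast; ring,
        key]
    have heq : (i : ℤ) * m - i * 1 = (m - 1) * i := by ring
    rw [heq]
    constructor
    · intro h
      -- 2*s ∣ (m-1)*i, and 2*s ∣ m+1, so 2*s ∣ 2*i, so s ∣ i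
      have h2s : ((2*s : ℕ) : ℤ) ∣ (m - 1) * i := dvd_trans (by push_cast; exact ⟨r, by ring⟩) h
      have : ((2*s : ℕ) : ℤ) ∣ 2 * i := by
        have h5 : ((2*s:ℕ):ℤ) ∣ (m+1) * i - (m-1) * i := dvd_sub (Dvd.dvd.mul_right hds i) h2s
        rwa [show (m+1)*(i:ℤ) - (m-1)*i = 2*i from by ring] at h5
      have := this
      push_cast at this
      exact (mul_dvd_mul_iff_left (two_ne_zero)).mp this
    · intro ⟨k, hk⟩
      have h2dvd : (2 : ℤ) ∣ m - 1 := by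
        have h2' : (2 : ℤ) ∣ m + 1 := dvd_trans (by push_cast; exact ⟨s, rfl⟩) hds
        omega
      have hrc2 : IsCoprime (r : ℤ) 2 := by
        rw [Int.isCoprime_iff_gcd_eq_one, Int.gcd]
        simpa using Nat.coprime_two_right.mpr hrodd
      obtain ⟨w, hw⟩ := hrc2.mul_dvd hdr h2dvd
      refine ⟨w * k, ?_⟩
      push_cast
      rw [hw, hk]; ring
  have h2 : ((i : ZMod (2*r*s)) * (m : ZMod (2*r*s)) = -((i : ZMod (2*r*s)) * 1)) ↔ (r : ℤ) ∣ i := by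
    rw [show (-((i : ZMod (2*r*s)) * 1) : ZMod (2*r*s)) = ((-(i * 1) : ℤ) : ZMod (2*r*s)) by push_cast; ring,
        show ((i : ZMod (2*r*s)) * (m : ZMod (2*r*s)) : ZMod (2*r*s)) = ((i * m : ℤ) : ZMod (2*r*s)) by push_cast; ring,
        key]
    have heq : (i : ℤ) * m - (-(i * 1)) = (m + 1) * i := by ring
    rw [heq]
    constructor
    · intro h
      have hr2 : (r : ℤ) ∣ (m + 1) * i := dvd_trans (by push_cast; exact ⟨2*s, by ring⟩) h
      have : (r : ℤ) ∣ 2 * i := by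
        have h5 : (r:ℤ) ∣ (m+1) * i - (m-1) * i := dvd_sub hr2 (Dvd.dvd.mul_right hdr i)
        rwa [show (m+1)*(i:ℤ) - (m-1)*i = 2*i from by ring] at h5
      have hr2' : IsCoprime (r : ℤ) 2 := by
        rw [Int.isCoprime_iff_gcd_eq_one, Int.gcd]
        simpa using Nat.coprime_two_right.mpr hrodd
      exact hr2'.dvd_of_dvd_mul_left this
    · intro ⟨k, hk⟩
      obtain ⟨l, hl⟩ := hds
      refine ⟨k * l, ?_⟩
      push_cast
      rw [hl, hk]; push_cast; ring
  rw [h1, h2]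
  simp only [Int.natCast_dvd_natCast]
  tauto
end
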